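/- arXiv:2505.02213 — 4 statements merged into one kernel-verified Lean document; each statement's English description precedes it below -/
import Mathlib

section
/- In the right-censored model (T ⊥ C, T with density f, survival S, hazard λ; C with continuous survival G; S, G > 0 on [0, t₀]), for any fixed L ∈ [0, t₀] define the uncentered influence function φ(y, δ) = S(L) · [1 − (1{y ≤ L, δ = 1}/(S(y)G(y)) − ∫₀^{min(L,y)} λ(u)/(S(u)G(u)) du)]. Then E[φ(Y, Δ)] = S(L) = P(T > L). -/
open MeasureTheory ProbabilityTheory
open scoped ENNReal NNReal

/-- The uncentered influence function has mean `S(L) = P(T > L)` in the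
right-censored model. -/
theorem stmt8 {Ω : Type*} [MeasurableSpace Ω] (μ : Measure Ω) [IsProbabilityMeasure μ]
    (T C : Ω → ℝ) (hT : Measurable T) (hC : Measurable C)
    (hTnn : ∀ ω, 0 ≤ T ω) (hCnn : ∀ ω, 0 ≤ C ω)
    (hind : IndepFun T C μ)
    (f : ℝ → ℝ) (hf_cont : Continuous f) (hf_nn : ∀ u, 0 ≤ f u)
    (hdens : ∀ s : ℝ, (μ {ω | T ω ≤ s}).toReal = ∫ u in Set.Iic s, f u)
    (S G lam : ℝ → ℝ)
    (hS : ∀ u, S u = (μ {ω | u < T ω}).toReal)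
    (hG : ∀ u, G u = (μ {ω | u < C ω}).toReal)
    (hlam : ∀ u, lam u = f u / S u)
    (hGcont : Continuous G)
    (t₀ : ℝ) (ht₀ : 0 < t₀) (hSpos : ∀ u ∈ Set.Icc 0 t₀, 0 < S u)
    (hGpos : ∀ u ∈ Set.Icc 0 t₀, 0 < G u)
    (L : ℝ) (hL : L ∈ Set.Icc 0 t₀) :
    (∫ ω, S L * (1 - ((if min (T ω) (C ω) ≤ L ∧ T ω ≤ C ω then
        1 / (S (min (T ω) (C ω)) * G (min (T ω) (C ω))) else 0)
      - ∫ u in (0:ℝ)..(min L (min (T ω) (C ω))), lam u / (S u * G u))) ∂μ)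
      = (μ {ω | L < T ω}).toReal := by
  classical
  have hL0 : 0 ≤ L := hL.1
  have hSL : 0 < S L := hSpos L hL
  have hGL : 0 < G L := hGpos L hL
  have hY : Measurable (fun ω => min (T ω) (C ω)) := hT.min hC
  have hSanti : Antitone S := by
    intro a b hab
    rw [hS a, hS b]
    exact ENNReal.toReal_mono (measure_ne_top μ _)
      (measure_mono (fun ω hω => lt_of_le_of_lt hab hω))
  have hGanti : Antitone G := by
    intro a b hab
    rw [hG a, hG b]
    exact ENNReal.toReal_mono (measure_ne_top μ _)
      (measure_mono (fun ω hω => lt_of_le_of_lt hab hω))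
  have hSmeas : Measurable S := hSanti.measurable
  have hGmeas : Measurable G := hGanti.measurable
  have hSnn : ∀ u, 0 ≤ S u := fun u => by rw [hS u]; exact ENNReal.toReal_nonneg
  have hGnn : ∀ u, 0 ≤ G u := fun u => by rw [hG u]; exact ENNReal.toReal_nonneg
  have hlam_eq : lam = fun u => f u / S u := funext hlam
  have hlammeas : Measurable lam := by
    rw [hlam_eq]; exact hf_cont.measurable.div hSmeas
  -- the density measure
  set d : ℝ → ℝ≥0 := fun u => Real.toNNReal (f u) with hd
  have hdmeas : Measurable d := hf_cont.measurable.real_toNNReal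
  set ρm : Measure ℝ := volume.withDensity (fun u => (d u : ℝ≥0∞)) with hρ
  have hcoe : ∀ u, ((d u : ℝ≥0∞)) = ENNReal.ofReal (f u) := fun u => rfl
  have hρapp : ∀ s : Set ℝ, MeasurableSet s → ρm s = ∫⁻ u in s, ENNReal.ofReal (f u) := by
    intro s hs
    rw [hρ, withDensity_apply _ hs]
    rfl
  have hint_iff : ∀ s : ℝ, IntegrableOn f (Set.Iic s) ↔ ρm (Set.Iic s) < ⊤ := by
    intro s
    rw [hρapp _ measurableSet_Iic]
    constructor
    · intro h
      have := h.2
      rwa [hasFiniteIntegral_iff_ofReal (Filter.Eventually.of_forall hf_nn)] at this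
    · intro h
      refine ⟨hf_cont.aestronglyMeasurable.restrict, ?_⟩
      rwa [hasFiniteIntegral_iff_ofReal (Filter.Eventually.of_forall hf_nn)]
  have hρIic : ∀ s : ℝ, IntegrableOn f (Set.Iic s) → ρm (Set.Iic s) = μ {ω | T ω ≤ s} := by
    intro s hs
    rw [hρapp _ measurableSet_Iic,
      ← MeasureTheory.ofReal_integral_eq_lintegral_ofReal hs
        (Filter.Eventually.of_forall hf_nn),
      ← hdens s, ENNReal.ofReal_toReal (measure_ne_top μ _)]
  have hex : ∃ s : ℝ, IntegrableOn f (Set.Iic s) := by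
    by_contra h
    push_neg at h
    have hzero : ∀ s : ℝ, μ {ω | T ω ≤ s} = 0 := by
      intro s
      have h1 := hdens s
      rw [MeasureTheory.integral_undef (h s)] at h1
      rcases ENNReal.toReal_eq_zero_iff _ |>.mp h1 with h2 | h2
      · exact h2
      · exact absurd h2 (measure_ne_top μ _)
    have hU : (Set.univ : Set Ω) = ⋃ n : ℕ, {ω | T ω ≤ (n : ℝ)} := by
      ext ω
      simp only [Set.mem_univ, Set.mem_iUnion, Set.mem_setOf_eq, true_iff]
      exact exists_nat_ge (T ω)
    have : μ Set.univ = 0 := by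
      rw [hU]
      refine le_antisymm (le_trans (measure_iUnion_le _) ?_) (by simp)
      simp [hzero]
    rw [measure_univ] at this
    exact one_ne_zero this
  have hbound1 : ∀ s : ℝ, IntegrableOn f (Set.Iic s) → ρm (Set.Iic s) ≤ 1 := by
    intro s hs
    rw [hρIic s hs]
    exact prob_le_one
  have hall : ∀ s : ℝ, ρm (Set.Iic s) ≤ 1 := by
    by_contra hcon
    push_neg at hcon
    obtain ⟨s₀, hs₀⟩ := hcon
    obtain ⟨s₁, hs₁⟩ := hex
    set N : Set ℝ := {s | 1 < ρm (Set.Iic s)} with hN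
    have hNne : N.Nonempty := ⟨s₀, hs₀⟩
    have hbdd : BddBelow N := by
      refine ⟨s₁, fun s hsN => ?_⟩
      by_contra hlt
      push_neg at hlt
      have h1 : ρm (Set.Iic s) ≤ ρm (Set.Iic s₁) :=
        measure_mono (Set.Iic_subset_Iic.mpr hlt.le)
      exact absurd (le_trans h1 (hbound1 s₁ hs₁)) (not_le.mpr hsN)
    set c := sInf N with hc
    have hlt_c : ∀ s : ℝ, s < c → ρm (Set.Iic s) ≤ 1 := by
      intro s hs
      by_contra h
      push_neg at h
      exact absurd (csInf_le hbdd h) (not_le.mpr hs)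
    have hIio : ρm (Set.Iio c) ≤ 1 := by
      have hU : Set.Iio c = ⋃ n : ℕ, Set.Iic (c - 1/(n+1)) := by
        ext x
        simp only [Set.mem_Iio, Set.mem_iUnion, Set.mem_Iic]
        constructor
        · intro hx
          obtain ⟨n, hn⟩ := exists_nat_one_div_lt (sub_pos.mpr hx)
          exact ⟨n, by linarith⟩
        · rintro ⟨n, hn⟩
          have : (0:ℝ) < 1/(n+1) := by positivity
          linarith
      have hdir : Directed (· ⊆ ·) (fun n : ℕ => Set.Iic (c - 1/(n+1 : ℝ))) := by
        apply Monotone.directed_le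
        intro m n hmn
        apply Set.Iic_subset_Iic.mpr
        have h1 : (1:ℝ)/(n+1) ≤ 1/(m+1) := by
          apply one_div_le_one_div_of_le (by positivity)
          exact_mod_cast add_le_add_left (Nat.cast_le.mpr hmn) 1
        linarith
      rw [hU, hdir.measure_iUnion]
      exact iSup_le fun n => hlt_c _ (by
        have : (0:ℝ) < 1/(n+1) := by positivity
        linarith)
    have hsingle : ρm ({c} : Set ℝ) = 0 :=
      withDensity_absolutelyContinuous _ _ (measure_singleton c)
    have hIic_c : ρm (Set.Iic c) ≤ 1 := by
      rw [show Set.Iic c = Set.Iio c ∪ {c} from (Set.Iio_union_right).symm]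
      calc ρm (Set.Iio c ∪ {c}) ≤ ρm (Set.Iio c) + ρm {c} := measure_union_le _ _
        _ ≤ 1 := by rw [hsingle, add_zero]; exact hIio
    obtain ⟨s₂, hs₂N, hs₂lt⟩ := exists_lt_of_csInf_lt hNne (lt_add_of_pos_right c one_pos)
    have hcs₂ : c ≤ s₂ := csInf_le hbdd hs₂N
    have hfin' : ρm (Set.Ioc c s₂) < ⊤ := by
      obtain ⟨M, hM⟩ :=
        (isCompact_Icc (a := c) (b := s₂)).exists_bound_of_continuousOn hf_cont.continuousOn
      rw [hρapp _ measurableSet_Ioc]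
      calc ∫⁻ u in Set.Ioc c s₂, ENNReal.ofReal (f u)
          ≤ ∫⁻ _ in Set.Ioc c s₂, ENNReal.ofReal M := by
            refine setLIntegral_mono measurable_const (fun u hu => ?_)
            exact ENNReal.ofReal_le_ofReal
              (le_trans (le_abs_self _) (hM u (Set.Ioc_subset_Icc_self hu)))
        _ = ENNReal.ofReal M * volume (Set.Ioc c s₂) := by
            rw [setLIntegral_const, mul_comm]
        _ < ⊤ := ENNReal.mul_lt_top ENNReal.ofReal_lt_top (by
            rw [Real.volume_Ioc]; exact ENNReal.ofReal_lt_top)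
    have hfin : ρm (Set.Iic s₂) < ⊤ := by
      rw [show Set.Iic s₂ = Set.Iic c ∪ Set.Ioc c s₂ from (Set.Iic_union_Ioc_eq_Iic hcs₂).symm]
      calc ρm (Set.Iic c ∪ Set.Ioc c s₂) ≤ ρm (Set.Iic c) + ρm (Set.Ioc c s₂) :=
            measure_union_le _ _
        _ < ⊤ := ENNReal.add_lt_top.mpr
            ⟨lt_of_le_of_lt hIic_c ENNReal.one_lt_top, hfin'⟩
    exact absurd (hbound1 s₂ ((hint_iff s₂).mpr hfin)) (not_le.mpr hs₂N)
  have hfint : ∀ s : ℝ, IntegrableOn f (Set.Iic s) :=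
    fun s => (hint_iff s).mpr (lt_of_le_of_lt (hall s) ENNReal.one_lt_top)
  have hmapT : μ.map T = ρm := by
    refine MeasureTheory.Measure.ext_of_Iic (μ.map T) ρm (fun a => ?_)
    rw [Measure.map_apply hT measurableSet_Iic]
    exact (hρIic a (hfint a)).symm
  have hTatom : ∀ t : ℝ, μ {ω | T ω = t} = 0 := by
    intro t
    have h1 : μ {ω | T ω = t} = μ.map T {t} := by
      rw [Measure.map_apply hT (measurableSet_singleton t)]
      congr 1
    rw [h1, hmapT]
    exact withDensity_absolutelyContinuous _ _ (measure_singleton t)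
  have hCatom : ∀ t : ℝ, μ {ω | C ω = t} = 0 := by
    intro t
    have key : ∀ n : ℕ, (μ {ω | C ω = t}).toReal ≤ G (t - 1/(n+1)) - G t := by
      intro n
      have hpos : (0:ℝ) < 1/(n+1) := by positivity
      have hsub : {ω | C ω = t} ⊆ {ω | t - 1/(n+1) < C ω} \ {ω | t < C ω} := by
        intro ω hω
        simp only [Set.mem_setOf_eq] at hω
        constructor
        · simp only [Set.mem_setOf_eq, hω]
          linarith
        · simp only [Set.mem_setOf_eq, hω]
          exact lt_irrefl t
      have hmono : {ω | t < C ω} ⊆ {ω | t - 1/(n+1) < C ω} := by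
        intro ω h
        simp only [Set.mem_setOf_eq] at *
        linarith
      have hms : MeasurableSet {ω | t < C ω} := hC measurableSet_Ioi
      calc (μ {ω | C ω = t}).toReal
          ≤ (μ ({ω | t - 1/(n+1) < C ω} \ {ω | t < C ω})).toReal :=
            ENNReal.toReal_mono (measure_ne_top μ _) (measure_mono hsub)
        _ = G (t - 1/(n+1)) - G t := by
            rw [measure_diff hmono hms.nullMeasurableSet (measure_ne_top μ _),
              ENNReal.toReal_sub_of_le (measure_mono hmono) (measure_ne_top μ _),
              ← hG, ← hG]
    have hlim : Filter.Tendsto (fun n : ℕ => G (t - 1/(n+1)) - G t)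
        Filter.atTop (nhds 0) := by
      have h1 : Filter.Tendsto (fun n : ℕ => t - 1/(n+1 : ℝ)) Filter.atTop (nhds t) := by
        have h2 := tendsto_one_div_add_atTop_nhds_zero_nat (𝕜 := ℝ)
        have := Filter.Tendsto.sub (tendsto_const_nhds (x := t)) h2
        simpa using this
      have := ((hGcont.tendsto t).comp h1).sub (tendsto_const_nhds (x := G t))
      simpa using this
    have hle : (μ {ω | C ω = t}).toReal ≤ 0 := ge_of_tendsto' hlim key
    have h0 : (μ {ω | C ω = t}).toReal = 0 := le_antisymm hle ENNReal.toReal_nonneg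
    rcases (ENNReal.toReal_eq_zero_iff _).mp h0 with h | h
    · exact h
    · exact absurd h (measure_ne_top μ _)
  have hTIci : ∀ t : ℝ, (μ {ω | t ≤ T ω}).toReal = S t := by
    intro t
    have h1 : {ω | t ≤ T ω} = {ω | T ω = t} ∪ {ω | t < T ω} := by
      ext ω
      simp only [Set.mem_setOf_eq, Set.mem_union]
      constructor
      · intro h
        rcases lt_or_eq_of_le h with h | h
        · exact Or.inr h
        · exact Or.inl h.symm
      · rintro (h | h)
        · exact h.ge
        · exact h.le
    rw [h1, le_antisymm (le_trans (measure_union_le _ _) (by rw [hTatom t, zero_add]))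
      (measure_mono Set.subset_union_right), ← hS]
  have hCIci : ∀ t : ℝ, (μ {ω | t ≤ C ω}).toReal = G t := by
    intro t
    have h1 : {ω | t ≤ C ω} = {ω | C ω = t} ∪ {ω | t < C ω} := by
      ext ω
      simp only [Set.mem_setOf_eq, Set.mem_union]
      constructor
      · intro h
        rcases lt_or_eq_of_le h with h | h
        · exact Or.inr h
        · exact Or.inl h.symm
      · rintro (h | h)
        · exact h.ge
        · exact h.le
    rw [h1, le_antisymm (le_trans (measure_union_le _ _) (by rw [hCatom t, zero_add]))
      (measure_mono Set.subset_union_right), ← hG]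
  -- f vanishes a.e. on negative reals
  have hfnull : ∀ᵐ u : ℝ, u ∈ Set.Iio (0:ℝ) → f u = 0 := by
    have h0 : ρm (Set.Iio 0) = 0 := by
      rw [← hmapT, Measure.map_apply hT measurableSet_Iio]
      have : T ⁻¹' Set.Iio 0 = ∅ := by
        ext ω
        simp only [Set.mem_preimage, Set.mem_Iio, Set.mem_empty_iff_false, iff_false, not_lt]
        exact hTnn ω
      rw [this, measure_empty]
    rw [hρapp _ measurableSet_Iio] at h0
    have h1 := (lintegral_eq_zero_iff (by fun_prop)).mp h0
    rw [Filter.EventuallyEq, ae_restrict_iff' measurableSet_Iio] at h1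
    filter_upwards [h1] with u hu hu0
    have := hu hu0
    simp only [Pi.zero_apply, ENNReal.ofReal_eq_zero] at this
    exact le_antisymm this (hf_nn u)
  have hSGL : 0 < S L * G L := mul_pos hSL hGL
  have hboundk : ∀ t : ℝ, t ≤ L → 0 < S t * G t ∧ 1/(S t * G t) ≤ 1/(S L * G L) := by
    intro t ht
    have h1 : S L ≤ S t := hSanti ht
    have h2 : G L ≤ G t := hGanti ht
    have h3 : 0 < S t * G t := mul_pos (lt_of_lt_of_le hSL h1) (lt_of_lt_of_le hGL h2)
    refine ⟨h3, one_div_le_one_div_of_le hSGL ?_⟩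
    exact mul_le_mul h1 h2 hGL.le (hSnn t)
  haveI hprobT : IsProbabilityMeasure (μ.map T) := Measure.isProbabilityMeasure_map hT.aemeasurable
  haveI hprobC : IsProbabilityMeasure (μ.map C) := Measure.isProbabilityMeasure_map hC.aemeasurable
  have hkmeas : Measurable (fun p : ℝ × ℝ =>
      if p.1 ≤ L ∧ p.1 ≤ p.2 then 1 / (S p.1 * G p.1) else 0) := by
    have hset : MeasurableSet {p : ℝ × ℝ | p.1 ≤ L ∧ p.1 ≤ p.2} := by
      have heq : {p : ℝ × ℝ | p.1 ≤ L ∧ p.1 ≤ p.2}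
          = (fun p : ℝ × ℝ => p.1) ⁻¹' Set.Iic L ∩ {p : ℝ × ℝ | p.1 ≤ p.2} := rfl
      rw [heq]
      exact (measurable_fst measurableSet_Iic).inter
        (measurableSet_le measurable_fst measurable_snd)
    exact Measurable.ite hset
      (measurable_const.div ((hSmeas.comp measurable_fst).mul (hGmeas.comp measurable_fst)))
      measurable_const
  have hk_bound : ∀ p : ℝ × ℝ,
      ‖if p.1 ≤ L ∧ p.1 ≤ p.2 then 1 / (S p.1 * G p.1) else 0‖ ≤ 1/(S L * G L) := by
    intro p
    by_cases h : p.1 ≤ L ∧ p.1 ≤ p.2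
    · rw [if_pos h, Real.norm_eq_abs,
        abs_of_nonneg (le_of_lt (one_div_pos.mpr (hboundk p.1 h.1).1))]
      exact (hboundk p.1 h.1).2
    · rw [if_neg h, norm_zero]
      positivity
  have hkint : Integrable (fun p : ℝ × ℝ =>
      if p.1 ≤ L ∧ p.1 ≤ p.2 then 1 / (S p.1 * G p.1) else 0)
      ((μ.map T).prod (μ.map C)) :=
    Integrable.mono' (integrable_const _) hkmeas.aestronglyMeasurable
      (Filter.Eventually.of_forall hk_bound)
  have EA : (∫ ω, (if min (T ω) (C ω) ≤ L ∧ T ω ≤ C ω then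
      1 / (S (min (T ω) (C ω)) * G (min (T ω) (C ω))) else 0) ∂μ)
      = ∫ u in Set.Ioc 0 L, f u / S u := by
    have hmap : μ.map (fun ω => (T ω, C ω)) = (μ.map T).prod (μ.map C) :=
      (ProbabilityTheory.indepFun_iff_map_prod_eq_prod_map_map
        hT.aemeasurable hC.aemeasurable).mp hind
    have step1 : (∫ ω, (if min (T ω) (C ω) ≤ L ∧ T ω ≤ C ω then
        1 / (S (min (T ω) (C ω)) * G (min (T ω) (C ω))) else 0) ∂μ)
        = ∫ p : ℝ × ℝ, (if p.1 ≤ L ∧ p.1 ≤ p.2 then 1 / (S p.1 * G p.1) else 0)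
          ∂((μ.map T).prod (μ.map C)) := by
      rw [← hmap, MeasureTheory.integral_map (hT.prodMk hC).aemeasurable
        hkmeas.aestronglyMeasurable]
      refine integral_congr_ae (Filter.Eventually.of_forall fun ω => ?_)
      by_cases h : T ω ≤ C ω
      · simp only [min_eq_left h, h, and_true]
      · simp [h]
    rw [step1, MeasureTheory.integral_prod _ hkint]
    have hinner : ∀ t : ℝ, (∫ c, (if t ≤ L ∧ t ≤ c then 1/(S t * G t) else 0) ∂(μ.map C))
        = (if t ≤ L then G t * (1/(S t * G t)) else 0) := by
      intro t
      by_cases htL : t ≤ L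
      · have heq : (fun c : ℝ => if t ≤ L ∧ t ≤ c then 1/(S t * G t) else 0)
            = Set.indicator (Set.Ici t) (fun _ => 1/(S t * G t)) := by
          funext c
          rw [Set.indicator_apply]
          simp [Set.mem_Ici, htL]
        rw [heq, MeasureTheory.integral_indicator_const _ measurableSet_Ici, measureReal_def,
          Measure.map_apply hC measurableSet_Ici]
        have h2 : C ⁻¹' Set.Ici t = {ω | t ≤ C ω} := rfl
        rw [h2, if_pos htL, smul_eq_mul, hCIci t]
      · simp [htL]
    have step2 : (∫ t, ∫ c, (if t ≤ L ∧ t ≤ c then 1/(S t * G t) else 0)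
        ∂(μ.map C) ∂(μ.map T))
        = ∫ t, (if t ≤ L then G t * (1/(S t * G t)) else 0) ∂(μ.map T) :=
      integral_congr_ae (Filter.Eventually.of_forall hinner)
    rw [step2, hmapT, hρ, integral_withDensity_eq_integral_smul hdmeas]
    have h0 : ∀ᵐ t : ℝ, t ≠ (0:ℝ) := by
      rw [ae_iff]
      have hset0 : {t : ℝ | ¬ t ≠ 0} = {(0:ℝ)} := by ext x; simp
      rw [hset0]
      exact measure_singleton 0
    have hq : (fun t => d t • (if t ≤ L then G t * (1/(S t * G t)) else 0))
        =ᵐ[volume] Set.indicator (Set.Ioc 0 L) (fun t => f t / S t) := by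
      filter_upwards [hfnull, h0] with t htneg ht0
      by_cases h1 : t ∈ Set.Ioc 0 L
      · rw [Set.indicator_of_mem h1]
        have htL : t ≤ L := h1.2
        have htt0 : t ∈ Set.Icc 0 t₀ := ⟨le_of_lt h1.1, le_trans htL hL.2⟩
        have hSt : S t ≠ 0 := ne_of_gt (hSpos t htt0)
        have hGt : G t ≠ 0 := ne_of_gt (hGpos t htt0)
        have hdt : (d t : ℝ) = f t := Real.coe_toNNReal _ (hf_nn t)
        rw [if_pos htL, NNReal.smul_def, smul_eq_mul, hdt]
        field_simp
      · rw [Set.indicator_of_notMem h1]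
        by_cases htL : t ≤ L
        · have ht : t < 0 := by
            rcases lt_trichotomy t 0 with h | h | h
            · exact h
            · exact absurd h ht0
            · exact absurd (Set.mem_Ioc.mpr ⟨h, htL⟩) h1
          have hft : f t = 0 := htneg ht
          have : d t = 0 := by
            rw [hd]
            simp [hft]
          rw [this, zero_smul]
        · rw [if_neg htL, smul_zero]
    rw [integral_congr_ae hq, integral_indicator measurableSet_Ioc]
  -- integrability of the first term
  have hAmeas : Measurable (fun ω => if min (T ω) (C ω) ≤ L ∧ T ω ≤ C ω then
      1 / (S (min (T ω) (C ω)) * G (min (T ω) (C ω))) else 0) := by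
    have hset : MeasurableSet {ω | min (T ω) (C ω) ≤ L ∧ T ω ≤ C ω} := by
      have heq : {ω | min (T ω) (C ω) ≤ L ∧ T ω ≤ C ω}
          = (fun ω => min (T ω) (C ω)) ⁻¹' Set.Iic L ∩ {ω | T ω ≤ C ω} := rfl
      rw [heq]
      exact (hY measurableSet_Iic).inter (measurableSet_le hT hC)
    exact Measurable.ite hset
      (measurable_const.div ((hSmeas.comp hY).mul (hGmeas.comp hY))) measurable_const
  have intA : Integrable (fun ω => if min (T ω) (C ω) ≤ L ∧ T ω ≤ C ω then
      1 / (S (min (T ω) (C ω)) * G (min (T ω) (C ω))) else 0) μ := by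
    refine Integrable.mono' (integrable_const (1/(S L * G L))) hAmeas.aestronglyMeasurable
      (Filter.Eventually.of_forall fun ω => ?_)
    by_cases h : min (T ω) (C ω) ≤ L ∧ T ω ≤ C ω
    · rw [if_pos h, Real.norm_eq_abs,
        abs_of_nonneg (le_of_lt (one_div_pos.mpr (hboundk _ h.1).1))]
      exact (hboundk _ h.1).2
    · rw [if_neg h, norm_zero]
      positivity
  -- the second (compensator) term
  have hWmeas : Measurable (fun p : Ω × ℝ =>
      if p.2 ≤ min (T p.1) (C p.1) then lam p.2 / (S p.2 * G p.2) else 0) := by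
    have hset : MeasurableSet {p : Ω × ℝ | p.2 ≤ min (T p.1) (C p.1)} :=
      measurableSet_le measurable_snd (hY.comp measurable_fst)
    exact Measurable.ite hset
      ((hlammeas.comp measurable_snd).div
        ((hSmeas.comp measurable_snd).mul (hGmeas.comp measurable_snd)))
      measurable_const
  obtain ⟨Mf, hMf⟩ :=
    (isCompact_Icc (a := (0:ℝ)) (b := L)).exists_bound_of_continuousOn hf_cont.continuousOn
  have hMf0 : 0 ≤ Mf := le_trans (norm_nonneg (f 0)) (hMf 0 (Set.left_mem_Icc.mpr hL0))
  have hdenpos : 0 < S L * (S L * G L) := by positivity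
  set M : ℝ := Mf / (S L * (S L * G L)) with hM
  have hM0 : 0 ≤ M := div_nonneg hMf0 hdenpos.le
  have hWbd : ∀ u : ℝ, u ∈ Set.Ioc 0 L → ∀ ω : Ω,
      ‖if u ≤ min (T ω) (C ω) then lam u / (S u * G u) else 0‖ ≤ M := by
    intro u hu ω
    have huL : u ≤ L := hu.2
    have htt0 : u ∈ Set.Icc 0 t₀ := ⟨le_of_lt hu.1, le_trans huL hL.2⟩
    have hSu : 0 < S u := hSpos u htt0
    have hGu : 0 < G u := hGpos u htt0
    by_cases h : u ≤ min (T ω) (C ω)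
    · rw [if_pos h]
      have hlam2 : lam u / (S u * G u) = f u / (S u * (S u * G u)) := by
        rw [hlam u, div_div]
      rw [hlam2, Real.norm_eq_abs,
        abs_of_nonneg (div_nonneg (hf_nn u) (le_of_lt (by positivity)))]
      have h1 : S L ≤ S u := hSanti huL
      have h2 : G L ≤ G u := hGanti huL
      refine div_le_div₀ hMf0
        (le_trans (le_abs_self _) (hMf u (Set.Ioc_subset_Icc_self hu))) hdenpos ?_
      exact mul_le_mul h1 (mul_le_mul h1 h2 hGL.le (hSnn u)) (by positivity) (hSnn u)
    · rw [if_neg h, norm_zero]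
      exact hM0
  haveI hfinres : IsFiniteMeasure (volume.restrict (Set.Ioc (0:ℝ) L)) := by
    constructor
    rw [Measure.restrict_apply_univ, Real.volume_Ioc]
    exact ENNReal.ofReal_lt_top
  have hae2 : ∀ᵐ p : Ω × ℝ ∂(μ.prod (volume.restrict (Set.Ioc (0:ℝ) L))),
      p.2 ∈ Set.Ioc (0:ℝ) L := by
    rw [ae_iff]
    have hset : {p : Ω × ℝ | ¬ p.2 ∈ Set.Ioc (0:ℝ) L}
        = (Set.univ : Set Ω) ×ˢ (Set.Ioc (0:ℝ) L)ᶜ := by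
      ext p
      simp [Set.mem_prod]
    rw [hset, Measure.prod_prod, Measure.restrict_apply measurableSet_Ioc.compl]
    simp
  have hWint : Integrable (fun p : Ω × ℝ =>
      if p.2 ≤ min (T p.1) (C p.1) then lam p.2 / (S p.2 * G p.2) else 0)
      (μ.prod (volume.restrict (Set.Ioc (0:ℝ) L))) := by
    refine Integrable.mono' (integrable_const M) hWmeas.aestronglyMeasurable ?_
    filter_upwards [hae2] with p hp
    exact hWbd p.2 hp p.1
  have hBrw : ∀ ω : Ω, (∫ u in (0:ℝ)..(min L (min (T ω) (C ω))), lam u / (S u * G u))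
      = ∫ u in Set.Ioc (0:ℝ) L,
          (if u ≤ min (T ω) (C ω) then lam u / (S u * G u) else 0) := by
    intro ω
    have h0m : (0:ℝ) ≤ min L (min (T ω) (C ω)) :=
      le_min hL0 (le_min (hTnn ω) (hCnn ω))
    rw [intervalIntegral.integral_of_le h0m]
    have hseteq : Set.Ioc (0:ℝ) (min L (min (T ω) (C ω)))
        = Set.Ioc (0:ℝ) L ∩ Set.Iic (min (T ω) (C ω)) := by
      rw [Set.Ioc_inter_Iic]
    rw [hseteq, ← MeasureTheory.setIntegral_indicator measurableSet_Iic]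
    refine setIntegral_congr_fun measurableSet_Ioc (fun u hu => ?_)
    rw [Set.indicator_apply]
    rfl
  have EB : (∫ ω, (∫ u in (0:ℝ)..(min L (min (T ω) (C ω))), lam u / (S u * G u)) ∂μ)
      = ∫ u in Set.Ioc (0:ℝ) L, f u / S u := by
    have h1 : (∫ ω, (∫ u in (0:ℝ)..(min L (min (T ω) (C ω))), lam u / (S u * G u)) ∂μ)
        = ∫ ω, (∫ u in Set.Ioc (0:ℝ) L,
            (if u ≤ min (T ω) (C ω) then lam u / (S u * G u) else 0)) ∂μ :=
      integral_congr_ae (Filter.Eventually.of_forall hBrw)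
    rw [h1, MeasureTheory.integral_integral_swap hWint]
    refine setIntegral_congr_fun measurableSet_Ioc (fun u hu => ?_)
    have hsetY : MeasurableSet {ω | u ≤ min (T ω) (C ω)} := hY measurableSet_Ici
    have hindc : (fun ω => if u ≤ min (T ω) (C ω) then lam u / (S u * G u) else 0)
        = Set.indicator {ω | u ≤ min (T ω) (C ω)} (fun _ => lam u / (S u * G u)) := by
      funext ω
      rw [Set.indicator_apply]
      rfl
    rw [hindc, MeasureTheory.integral_indicator_const _ hsetY]
    have hsplit : {ω | u ≤ min (T ω) (C ω)} = T ⁻¹' Set.Ici u ∩ C ⁻¹' Set.Ici u := by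
      ext ω
      simp [le_min_iff]
    have hm : μ {ω | u ≤ min (T ω) (C ω)} = μ (T ⁻¹' Set.Ici u) * μ (C ⁻¹' Set.Ici u) := by
      rw [hsplit]
      exact hind.measure_inter_preimage_eq_mul _ _ measurableSet_Ici measurableSet_Ici
    have hTp : (μ (T ⁻¹' Set.Ici u)).toReal = S u := hTIci u
    have hCp : (μ (C ⁻¹' Set.Ici u)).toReal = G u := hCIci u
    rw [measureReal_def, hm, ENNReal.toReal_mul, hTp, hCp, smul_eq_mul, hlam u]
    have htt0 : u ∈ Set.Icc 0 t₀ := ⟨le_of_lt hu.1, le_trans hu.2 hL.2⟩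
    have hSu : S u ≠ 0 := ne_of_gt (hSpos u htt0)
    have hGu : G u ≠ 0 := ne_of_gt (hGpos u htt0)
    field_simp
  have intB : Integrable (fun ω =>
      ∫ u in (0:ℝ)..(min L (min (T ω) (C ω))), lam u / (S u * G u)) μ := by
    have h2 := hWint.integral_prod_left
    exact h2.congr (Filter.Eventually.of_forall fun ω => (hBrw ω).symm)
  -- assembly
  have hmain : (∫ ω, S L * (1 - ((if min (T ω) (C ω) ≤ L ∧ T ω ≤ C ω then
        1 / (S (min (T ω) (C ω)) * G (min (T ω) (C ω))) else 0)
      - ∫ u in (0:ℝ)..(min L (min (T ω) (C ω))), lam u / (S u * G u))) ∂μ)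
      = S L * (1 - ((∫ ω, (if min (T ω) (C ω) ≤ L ∧ T ω ≤ C ω then
        1 / (S (min (T ω) (C ω)) * G (min (T ω) (C ω))) else 0) ∂μ)
      - ∫ ω, (∫ u in (0:ℝ)..(min L (min (T ω) (C ω))), lam u / (S u * G u)) ∂μ)) := by
    rw [MeasureTheory.integral_const_mul]
    congr 1
    have intAB : Integrable (fun ω => (if min (T ω) (C ω) ≤ L ∧ T ω ≤ C ω then
        1 / (S (min (T ω) (C ω)) * G (min (T ω) (C ω))) else 0)
        - ∫ u in (0:ℝ)..(min L (min (T ω) (C ω))), lam u / (S u * G u)) μ := intA.sub intB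
    rw [integral_sub (integrable_const 1) intAB, integral_sub intA intB,
      integral_const]
    simp
  rw [hmain, EA, EB, sub_self, sub_zero, mul_one]
  exact hS L
end

section
/- In the right-censored model with true survival S₀ (hazard λ₀, density f₀) for T and true censoring survival G₀ for C (independent, both continuous and positive on [0, t₀]), let S (hazard λ, via S(t) = exp(−∫₀ᵗ λ)) and G be arbitrary candidate survival functions, positive on [0, t₀], and fix L ∈ [0, t₀]. Define φ(y, δ) = S(L)[1 − (1{y ≤ L, δ=1}/(S(y)G(y)) − ∫₀^{min(L,y)} λ(u)/(S(u)G(u)) du)]. Then the bias satisfies E[φ(Y, Δ)] − S₀(L) = S(L) ∫₀ᴸ (S₀(u)/S(u)) (G₀(u)/G(u) − 1) (λ(u) − λ₀(u)) du. -/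
open MeasureTheory ProbabilityTheory Set Filter Topology
open scoped NNReal ENNReal

lemma tail_closed {Ω : Type*} [MeasurableSpace Ω] (μ : Measure Ω) [IsProbabilityMeasure μ]
    (X : Ω → ℝ) (hX : Measurable X) (H : ℝ → ℝ) (hH : Continuous H)
    (hHdef : ∀ u, H u = (μ {ω | u < X ω}).toReal) (u : ℝ) :
    (μ {ω | u ≤ X ω}).toReal = H u := by
  set s : ℕ → Set Ω := fun n => {ω | u - 1/(n+1) < X ω} with hs
  have hmeas : ∀ n, MeasurableSet (s n) := fun n => measurableSet_lt measurable_const hX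
  have hanti : Antitone s := by
    intro n m hnm ω hω
    simp only [s, Set.mem_setOf_eq] at *
    have h1 : (1:ℝ)/(m+1) ≤ 1/(n+1) := by
      apply one_div_le_one_div_of_le
      · positivity
      · exact_mod_cast by exact_mod_cast Nat.add_le_add_right hnm 1
    linarith
  have hiInter : (⋂ n, s n) = {ω | u ≤ X ω} := by
    ext ω
    simp only [Set.mem_iInter, s, Set.mem_setOf_eq]
    constructor
    · intro h
      by_contra hc
      push_neg at hc
      obtain ⟨n, hn⟩ := exists_nat_one_div_lt (by linarith : (0:ℝ) < u - X ω)
      have := h n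
      linarith
    · intro h n
      have : (0:ℝ) < 1/(n+1) := by positivity
      linarith
  have htend : Tendsto (fun n => (μ (s n)).toReal) atTop (𝓝 ((μ {ω | u ≤ X ω}).toReal)) := by
    rw [← hiInter]
    exact (ENNReal.tendsto_toReal (measure_ne_top _ _)).comp
      (tendsto_measure_iInter_atTop (fun n => (hmeas n).nullMeasurableSet) hanti ⟨0, measure_ne_top _ _⟩)
  have htend2 : Tendsto (fun n => (μ (s n)).toReal) atTop (𝓝 (H u)) := by
    have heq : (fun n : ℕ => (μ (s n)).toReal) = fun n : ℕ => H (u - 1/((n:ℝ)+1)) := by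
      funext n; rw [hHdef]
    rw [heq]
    refine (hH.tendsto u).comp ?_
    have h2 : Tendsto (fun n : ℕ => u - 1/((n:ℝ)+1)) atTop (𝓝 (u - 0)) :=
      tendsto_const_nhds.sub tendsto_one_div_add_atTop_nhds_zero_nat
    simpa using h2
  exact tendsto_nhds_unique htend htend2
lemma f0_intOn {Ω : Type*} [MeasurableSpace Ω] (μ : Measure Ω) [IsProbabilityMeasure μ]
    (T : Ω → ℝ) (f₀ : ℝ → ℝ)
    (hdens : ∀ s : ℝ, (μ {ω | T ω ≤ s}).toReal = ∫ u in Set.Iic s, f₀ u) :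
    ∀ s : ℝ, IntegrableOn f₀ (Iic s) := by
  by_contra hcon
  push_neg at hcon
  obtain ⟨s₁, hs₁⟩ := hcon
  have hz : ∀ n : ℕ, μ {ω | T ω ≤ s₁ + n} = 0 := by
    intro n
    have hni : ¬ IntegrableOn f₀ (Iic (s₁ + n)) := fun h =>
      hs₁ (h.mono_set (Iic_subset_Iic.mpr (le_add_of_nonneg_right (Nat.cast_nonneg n))))
    have h0 : (μ {ω | T ω ≤ s₁ + n}).toReal = 0 := by
      rw [hdens]; exact integral_undef hni
    simpa [measure_ne_top μ _] using (ENNReal.toReal_eq_zero_iff _).mp h0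
  have hnull : μ (⋃ n : ℕ, {ω | T ω ≤ s₁ + n}) = 0 := measure_iUnion_null hz
  have huniv : (⋃ n : ℕ, {ω | T ω ≤ s₁ + n}) = univ := by
    ext ω
    simp only [mem_iUnion, mem_setOf_eq, mem_univ, iff_true]
    obtain ⟨n, hn⟩ := exists_nat_ge (T ω - s₁)
    exact ⟨n, by linarith⟩
  rw [huniv, measure_univ] at hnull
  exact one_ne_zero hnull


lemma stepC (f₀ lam S₀ S : ℝ → ℝ) (hf : Continuous f₀) (hl : Continuous lam)
    (hS₀F : ∀ u, S₀ u = 1 - ∫ v in (0:ℝ)..u, f₀ v)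
    (hS : ∀ u, S u = Real.exp (-∫ v in (0:ℝ)..u, lam v)) (L : ℝ) :
    ∫ u in (0:ℝ)..L, (f₀ u - S₀ u * lam u) / S u = 1 - S₀ L / S L := by
  set Λ : ℝ → ℝ := fun u => ∫ v in (0:ℝ)..u, lam v with hΛ
  have hΛd : ∀ u, HasDerivAt Λ (lam u) u := fun u =>
    intervalIntegral.integral_hasDerivAt_right (hl.intervalIntegrable _ _)
      hl.stronglyMeasurable.stronglyMeasurableAtFilter hl.continuousAt
  have hΛcont : Continuous Λ := continuous_iff_continuousAt.mpr fun u => (hΛd u).continuousAt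
  have hS₀fun : S₀ = fun u => 1 - ∫ v in (0:ℝ)..u, f₀ v := funext hS₀F
  have hS₀d : ∀ u, HasDerivAt S₀ (-(f₀ u)) u := by
    intro u
    rw [hS₀fun]
    exact (intervalIntegral.integral_hasDerivAt_right (hf.intervalIntegrable _ _)
        hf.stronglyMeasurable.stronglyMeasurableAtFilter hf.continuousAt).const_sub 1
  have hS₀cont : Continuous S₀ := continuous_iff_continuousAt.mpr fun u => (hS₀d u).continuousAt
  have hinv : ∀ u, 1 / S u = Real.exp (Λ u) := by
    intro u
    rw [hS, Real.exp_neg, one_div, inv_inv]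
  set ψ : ℝ → ℝ := fun u => S₀ u * Real.exp (Λ u) with hψ
  have hψd : ∀ u, HasDerivAt ψ ((-(f₀ u)) * Real.exp (Λ u) + S₀ u * (Real.exp (Λ u) * lam u)) u :=
    fun u => (hS₀d u).mul ((hΛd u).exp)
  have key : ∫ u in (0:ℝ)..L, ((-(f₀ u)) * Real.exp (Λ u) + S₀ u * (Real.exp (Λ u) * lam u))
      = ψ L - ψ 0 :=
    intervalIntegral.integral_eq_sub_of_hasDerivAt (fun u _ => hψd u)
      (Continuous.intervalIntegrable
        ((hf.neg.mul (hΛcont.rexp)).add (hS₀cont.mul ((hΛcont.rexp).mul hl))) _ _)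
  have hcongr : ∀ u, (f₀ u - S₀ u * lam u) / S u
      = -((-(f₀ u)) * Real.exp (Λ u) + S₀ u * (Real.exp (Λ u) * lam u)) := by
    intro u
    rw [div_eq_mul_one_div, hinv u]; ring
  rw [intervalIntegral.integral_congr (g := fun u => -((-(f₀ u)) * Real.exp (Λ u) + S₀ u * (Real.exp (Λ u) * lam u))) (fun u _ => hcongr u),
    intervalIntegral.integral_neg, key]
  have hψ0 : ψ 0 = 1 := by
    simp [hψ, hS₀F, hΛ]
  have hψL : S₀ L / S L = ψ L := by
    rw [hψ, div_eq_mul_one_div, hinv L]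
  rw [hψ0, hψL]; ring

lemma mapT_eq {Ω : Type*} [MeasurableSpace Ω] (μ : Measure Ω) [IsProbabilityMeasure μ]
    (T : Ω → ℝ) (hT : Measurable T)
    (f₀ : ℝ → ℝ) (hf₀_nn : ∀ u, 0 ≤ f₀ u)
    (hdens : ∀ s : ℝ, (μ {ω | T ω ≤ s}).toReal = ∫ u in Set.Iic s, f₀ u) :
    μ.map T = volume.withDensity (fun u => ENNReal.ofReal (f₀ u)) := by
  have hInt := f0_intOn μ T f₀ hdens
  haveI : IsProbabilityMeasure (μ.map T) := Measure.isProbabilityMeasure_map hT.aemeasurable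
  refine Measure.ext_of_Iic (μ.map T) _ (fun a => ?_)
  rw [Measure.map_apply hT measurableSet_Iic, withDensity_apply _ measurableSet_Iic]
  have h1 : μ (T ⁻¹' Iic a) = ENNReal.ofReal ((μ (T ⁻¹' Iic a)).toReal) :=
    (ENNReal.ofReal_toReal (measure_ne_top _ _)).symm
  rw [h1]
  have h2 : (μ (T ⁻¹' Iic a)).toReal = ∫ u in Iic a, f₀ u := hdens a
  rw [h2, ofReal_integral_eq_lintegral_ofReal (hInt a) (ae_of_all _ hf₀_nn)]

lemma integral_mapT (f₀ : ℝ → ℝ) (hf₀_cont : Continuous f₀) (hf₀_nn : ∀ u, 0 ≤ f₀ u)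
    (g : ℝ → ℝ) :
    ∫ u, g u ∂(volume.withDensity fun u => ENNReal.ofReal (f₀ u)) = ∫ u, f₀ u * g u := by
  have h : (fun u => ENNReal.ofReal (f₀ u)) = fun u => ((Real.toNNReal (f₀ u) : ℝ≥0) : ℝ≥0∞) := rfl
  rw [h, integral_withDensity_eq_integral_smul (hf₀_cont.measurable.real_toNNReal) g]
  congr 1; funext u
  simp [NNReal.smul_def, Real.coe_toNNReal _ (hf₀_nn u)]

lemma f0_neg_zero {Ω : Type*} [MeasurableSpace Ω] (μ : Measure Ω) [IsProbabilityMeasure μ]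
    (T : Ω → ℝ) (hTnn : ∀ ω, 0 ≤ T ω)
    (f₀ : ℝ → ℝ) (hf₀_cont : Continuous f₀)
    (hdens : ∀ s : ℝ, (μ {ω | T ω ≤ s}).toReal = ∫ u in Set.Iic s, f₀ u) : ∀ x < 0, f₀ x = 0 := by
  intro x hx
  have hInt := f0_intOn μ T f₀ hdens
  have hF : ∀ s, s < 0 → ∫ u in Iic s, f₀ u = 0 := by
    intro s hs
    rw [← hdens]
    have hempty : {ω | T ω ≤ s} = ∅ :=
      eq_empty_iff_forall_notMem.mpr fun ω h =>
        absurd h (not_le.mpr (lt_of_lt_of_le hs (hTnn ω)))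
    simp [hempty]
  have hprim : ∀ u, u < 0 → ∫ v in (x-1)..u, f₀ v = 0 := by
    intro u hu
    rw [← intervalIntegral.integral_Iic_sub_Iic (hInt _) (hInt _), hF u hu, hF (x-1) (by linarith), sub_zero]
  have hd : HasDerivAt (fun u => ∫ v in (x-1)..u, f₀ v) (f₀ x) x :=
    intervalIntegral.integral_hasDerivAt_right (hf₀_cont.intervalIntegrable _ _)
      (hf₀_cont.stronglyMeasurable.stronglyMeasurableAtFilter) hf₀_cont.continuousAt
  have hev : (fun u => ∫ v in (x-1)..u, f₀ v) =ᶠ[𝓝 x] (fun _ => (0:ℝ)) := by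
    filter_upwards [Iio_mem_nhds hx] with u hu
    exact hprim u hu
  have h1 : deriv (fun u => ∫ v in (x-1)..u, f₀ v) x = f₀ x := hd.deriv
  rw [hev.deriv_eq] at h1
  simpa using h1.symm

lemma S0_formula {Ω : Type*} [MeasurableSpace Ω] (μ : Measure Ω) [IsProbabilityMeasure μ]
    (T : Ω → ℝ) (hT : Measurable T) (hTnn : ∀ ω, 0 ≤ T ω)
    (f₀ : ℝ → ℝ) (hf₀_cont : Continuous f₀)
    (hdens : ∀ s : ℝ, (μ {ω | T ω ≤ s}).toReal = ∫ u in Set.Iic s, f₀ u)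
    (S₀ : ℝ → ℝ) (hS₀ : ∀ u, S₀ u = (μ {ω | u < T ω}).toReal) :
    ∀ u, S₀ u = 1 - ∫ v in (0:ℝ)..u, f₀ v := by
  have hInt := f0_intOn μ T f₀ hdens
  have hIic0 : ∫ u in Iic (0:ℝ), f₀ u = 0 := by
    rw [integral_Iic_eq_integral_Iio,
      setIntegral_congr_fun measurableSet_Iio
        (fun x (hx : x ∈ Iio (0:ℝ)) => f0_neg_zero μ T hTnn f₀ hf₀_cont hdens x hx)]
    simp
  intro u
  rw [hS₀]
  have hc : {ω | u < T ω} = {ω | T ω ≤ u}ᶜ := by ext ω; simp [not_le]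
  have hms : MeasurableSet {ω | T ω ≤ u} := hT measurableSet_Iic
  rw [hc, measure_compl hms (measure_ne_top _ _), measure_univ,
    ENNReal.toReal_sub_of_le prob_le_one ENNReal.one_ne_top, ENNReal.toReal_one, hdens,
    ← intervalIntegral.integral_Iic_sub_Iic (hInt 0) (hInt u), hIic0, sub_zero]

/-- Bias formula for the uncentered influence function with candidate nuisances `S`
(generated by hazard `lam`) and `G`:
`E[φ(Y,Δ)] - S₀(L) = S(L) ∫₀ᴸ (S₀(u)/S(u)) (G₀(u)/G(u) - 1) (lam(u) - lam₀(u)) du`. -/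
theorem stmt9 {Ω : Type*} [MeasurableSpace Ω] (μ : Measure Ω) [IsProbabilityMeasure μ]
    (T C : Ω → ℝ) (hT : Measurable T) (hC : Measurable C)
    (hTnn : ∀ ω, 0 ≤ T ω) (hCnn : ∀ ω, 0 ≤ C ω)
    (hind : IndepFun T C μ)
    (f₀ : ℝ → ℝ) (hf₀_cont : Continuous f₀) (hf₀_nn : ∀ u, 0 ≤ f₀ u)
    (hdens : ∀ s : ℝ, (μ {ω | T ω ≤ s}).toReal = ∫ u in Set.Iic s, f₀ u)
    (S₀ G₀ lam₀ : ℝ → ℝ)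
    (hS₀ : ∀ u, S₀ u = (μ {ω | u < T ω}).toReal)
    (hG₀ : ∀ u, G₀ u = (μ {ω | u < C ω}).toReal)
    (hlam₀ : ∀ u, lam₀ u = f₀ u / S₀ u)
    (hG₀cont : Continuous G₀)
    (t₀ : ℝ) (ht₀ : 0 < t₀) (hS₀pos : ∀ u ∈ Set.Icc 0 t₀, 0 < S₀ u)
    (hG₀pos : ∀ u ∈ Set.Icc 0 t₀, 0 < G₀ u)
    (lam : ℝ → ℝ) (hlam_cont : Continuous lam) (hlam_nn : ∀ u, 0 ≤ lam u)
    (S : ℝ → ℝ) (hS : ∀ u, S u = Real.exp (-∫ v in (0:ℝ)..u, lam v))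
    (G : ℝ → ℝ) (hGcont : Continuous G) (hGpos : ∀ u ∈ Set.Icc 0 t₀, 0 < G u)
    (L : ℝ) (hL : L ∈ Set.Icc 0 t₀) :
    (∫ ω, S L * (1 - ((if min (T ω) (C ω) ≤ L ∧ T ω ≤ C ω then
        1 / (S (min (T ω) (C ω)) * G (min (T ω) (C ω))) else 0)
      - ∫ u in (0:ℝ)..(min L (min (T ω) (C ω))), lam u / (S u * G u))) ∂μ) - S₀ L
      = S L * ∫ u in (0:ℝ)..L, (S₀ u / S u) * (G₀ u / G u - 1) * (lam u - lam₀ u) := by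
  obtain ⟨hL0, hLt⟩ := hL
  have hIccsub : Icc (0:ℝ) L ⊆ Icc 0 t₀ := Icc_subset_Icc le_rfl hLt
  have hYmeas : Measurable (fun ω => min (T ω) (C ω)) := hT.min hC
  -- properties of S and S₀
  have hΛd : ∀ u, HasDerivAt (fun w => ∫ v in (0:ℝ)..w, lam v) (lam u) u := fun u =>
    intervalIntegral.integral_hasDerivAt_right (hlam_cont.intervalIntegrable _ _)
      hlam_cont.stronglyMeasurable.stronglyMeasurableAtFilter hlam_cont.continuousAt
  have hΛcont : Continuous (fun w => ∫ v in (0:ℝ)..w, lam v) :=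
    continuous_iff_continuousAt.mpr fun u => (hΛd u).continuousAt
  have hScont : Continuous S := by
    rw [funext hS]; exact (hΛcont.neg).rexp
  have hSpos : ∀ u, 0 < S u := fun u => by rw [hS]; exact Real.exp_pos _
  have hS₀F := S0_formula μ T hT hTnn f₀ hf₀_cont hdens S₀ hS₀
  have hprimd : ∀ u, HasDerivAt (fun w => ∫ v in (0:ℝ)..w, f₀ v) (f₀ u) u := fun u =>
    intervalIntegral.integral_hasDerivAt_right (hf₀_cont.intervalIntegrable _ _)
      hf₀_cont.stronglyMeasurable.stronglyMeasurableAtFilter hf₀_cont.continuousAt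
  have hS₀cont : Continuous S₀ := by
    rw [funext hS₀F]
    exact continuous_const.sub (continuous_iff_continuousAt.mpr fun u => (hprimd u).continuousAt)
  -- tail probabilities
  have hS₀tail : ∀ u, (μ {ω | u ≤ T ω}).toReal = S₀ u := fun u =>
    tail_closed μ T hT S₀ hS₀cont hS₀ u
  have hG₀tail : ∀ u, (μ {ω | u ≤ C ω}).toReal = G₀ u := fun u =>
    tail_closed μ C hC G₀ hG₀cont hG₀ u
  -- bounds
  have hbcontOn : ContinuousOn (fun t => 1 / (S t * G t)) (Icc 0 t₀) :=
    ContinuousOn.div continuousOn_const (hScont.continuousOn.mul hGcont.continuousOn)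
      (fun u hu => ne_of_gt (mul_pos (hSpos u) (hGpos u hu)))
  have hgcontOn : ContinuousOn (fun t => lam t / (S t * G t)) (Icc 0 t₀) :=
    ContinuousOn.div hlam_cont.continuousOn (hScont.continuousOn.mul hGcont.continuousOn)
      (fun u hu => ne_of_gt (mul_pos (hSpos u) (hGpos u hu)))
  obtain ⟨Mb, hMb⟩ := isCompact_Icc.exists_bound_of_continuousOn hbcontOn
  obtain ⟨Mg, hMg⟩ := isCompact_Icc.exists_bound_of_continuousOn hgcontOn
  have hMb0 : 0 ≤ Mb := le_trans (norm_nonneg _) (hMb 0 ⟨le_rfl, le_of_lt ht₀⟩)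
  have hMg0 : 0 ≤ Mg := le_trans (norm_nonneg _) (hMg 0 ⟨le_rfl, le_of_lt ht₀⟩)
  have hbmeas : Measurable (fun t : ℝ => 1 / (S t * G t)) :=
    measurable_const.div (hScont.measurable.mul hGcont.measurable)
  have hgmeas : Measurable (fun t : ℝ => lam t / (S t * G t)) :=
    hlam_cont.measurable.div (hScont.measurable.mul hGcont.measurable)
  -- first random term
  set k : ℝ × ℝ → ℝ :=
    fun p => if 0 ≤ p.1 ∧ p.1 ≤ L ∧ p.1 ≤ p.2 then 1 / (S p.1 * G p.1) else 0 with hk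
  have hkmeas : Measurable k := by
    refine Measurable.ite ?_ (hbmeas.comp measurable_fst) measurable_const
    exact ((measurableSet_le measurable_const measurable_fst).inter
      ((measurableSet_le measurable_fst measurable_const).inter
      (measurableSet_le measurable_fst measurable_snd)))
  have hkbd : ∀ p, ‖k p‖ ≤ Mb := by
    intro p
    simp only [hk]
    by_cases h : 0 ≤ p.1 ∧ p.1 ≤ L ∧ p.1 ≤ p.2
    · simp only [if_pos h]
      exact hMb p.1 ⟨h.1, le_trans h.2.1 hLt⟩
    · simp only [if_neg h, norm_zero]; exact hMb0
  have hW₁eq : ∀ ω, (if min (T ω) (C ω) ≤ L ∧ T ω ≤ C ω then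
      1 / (S (min (T ω) (C ω)) * G (min (T ω) (C ω))) else 0) = k (T ω, C ω) := by
    intro ω
    simp only [hk]
    by_cases h : T ω ≤ C ω
    · have hmin : min (T ω) (C ω) = T ω := min_eq_left h
      rw [hmin]
      by_cases h2 : T ω ≤ L
      · rw [if_pos ⟨h2, h⟩, if_pos ⟨hTnn ω, h2, h⟩]
      · rw [if_neg (fun hc => h2 hc.1), if_neg (fun hc => h2 hc.2.1)]
    · rw [if_neg (fun hc => h hc.2), if_neg (fun hc => h hc.2.2)]
  have hpair : Measurable (fun ω => (T ω, C ω)) := hT.prodMk hC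
  have hW₁int : Integrable (fun ω => k (T ω, C ω)) μ :=
    ⟨((hkmeas.comp hpair).aestronglyMeasurable),
      HasFiniteIntegral.of_bounded (ae_of_all _ fun ω => hkbd _)⟩
  haveI hPT : IsProbabilityMeasure (μ.map T) := Measure.isProbabilityMeasure_map hT.aemeasurable
  haveI hPC : IsProbabilityMeasure (μ.map C) := Measure.isProbabilityMeasure_map hC.aemeasurable
  have hEW₁ : ∫ ω, k (T ω, C ω) ∂μ
      = ∫ u in (0:ℝ)..L, f₀ u * (1 / (S u * G u) * G₀ u) := by
    have hjoint : μ.map (fun ω => (T ω, C ω)) = (μ.map T).prod (μ.map C) :=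
      (indepFun_iff_map_prod_eq_prod_map_map hT.aemeasurable hC.aemeasurable).mp hind
    have hstep1 : ∫ ω, k (T ω, C ω) ∂μ = ∫ p, k p ∂((μ.map T).prod (μ.map C)) := by
      rw [← hjoint, integral_map hpair.aemeasurable hkmeas.aestronglyMeasurable]
    have hkint : Integrable k ((μ.map T).prod (μ.map C)) :=
      ⟨hkmeas.aestronglyMeasurable, HasFiniteIntegral.of_bounded (ae_of_all _ hkbd)⟩
    rw [hstep1, integral_prod k hkint]
    have hinner : ∀ t, ∫ c, k (t, c) ∂(μ.map C)
        = (if 0 ≤ t ∧ t ≤ L then 1 / (S t * G t) else 0) * G₀ t := by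
      intro t
      by_cases h : 0 ≤ t ∧ t ≤ L
      · have heqf : (fun c => k (t, c)) = (Ici t).indicator (fun _ => 1 / (S t * G t)) := by
          funext c
          simp only [hk, indicator_apply, mem_Ici]
          by_cases hc : t ≤ c
          · rw [if_pos ⟨h.1, h.2, hc⟩, if_pos hc]
          · rw [if_neg (fun hcon => hc hcon.2.2), if_neg hc]
        rw [heqf, integral_indicator measurableSet_Ici, setIntegral_const, measureReal_def,
          Measure.map_apply hC measurableSet_Ici]
        have hpre : C ⁻¹' Ici t = {ω | t ≤ C ω} := rfl
        rw [hpre, hG₀tail t, if_pos h, smul_eq_mul, mul_comm]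
      · have heqf : (fun c => k (t, c)) = fun _ => (0:ℝ) := by
          funext c
          simp only [hk]
          rw [if_neg]
          intro hcon
          exact h ⟨hcon.1, hcon.2.1⟩
        rw [heqf, integral_const, if_neg h, smul_eq_mul, mul_zero, zero_mul]
    rw [integral_congr_ae (ae_of_all _ hinner), mapT_eq μ T hT f₀ hf₀_nn hdens,
      integral_mapT f₀ hf₀_cont hf₀_nn
        (fun t => (if 0 ≤ t ∧ t ≤ L then 1 / (S t * G t) else 0) * G₀ t)]
    have hzero : ∀ t ∉ Icc (0:ℝ) L,
        f₀ t * ((if 0 ≤ t ∧ t ≤ L then 1 / (S t * G t) else 0) * G₀ t) = 0 := by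
      intro t ht
      rw [if_neg (fun hc => ht ⟨hc.1, hc.2⟩), zero_mul, mul_zero]
    rw [← setIntegral_eq_integral_of_forall_compl_eq_zero hzero,
      integral_Icc_eq_integral_Ioc, ← intervalIntegral.integral_of_le hL0]
    refine intervalIntegral.integral_congr fun u hu => ?_
    rw [uIcc_of_le hL0] at hu
    rw [if_pos ⟨hu.1, hu.2⟩]
  -- second random term
  set ν : Measure ℝ := volume.restrict (Ioc 0 L) with hν
  haveI hνfin : IsFiniteMeasure ν := by
    constructor
    rw [hν, Measure.restrict_apply_univ, Real.volume_Ioc]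
    exact ENNReal.ofReal_lt_top
  set F : Ω → ℝ → ℝ := fun ω u => if u ≤ min (T ω) (C ω) then lam u / (S u * G u) else 0
    with hF
  have hW₂eq : ∀ ω, (∫ u in (0:ℝ)..(min L (min (T ω) (C ω))), lam u / (S u * G u))
      = ∫ u, F ω u ∂ν := by
    intro ω
    have h1 : (0:ℝ) ≤ min L (min (T ω) (C ω)) := le_min hL0 (le_min (hTnn ω) (hCnn ω))
    have hind2 : F ω = (Iic (min (T ω) (C ω))).indicator (fun u => lam u / (S u * G u)) := by
      funext u
      simp only [hF, indicator_apply, mem_Iic]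
    rw [intervalIntegral.integral_of_le h1, hind2, hν,
      integral_indicator measurableSet_Iic, Measure.restrict_restrict measurableSet_Iic,
      inter_comm, Ioc_inter_Iic]
  have hFumeas : Measurable (Function.uncurry F) := by
    refine Measurable.ite ?_ (hgmeas.comp measurable_snd) measurable_const
    exact measurableSet_le measurable_snd (hYmeas.comp measurable_fst)
  have hFae : ∀ᵐ p ∂(μ.prod ν), ‖Function.uncurry F p‖ ≤ Mg := by
    have hae : ∀ᵐ p ∂(μ.prod ν), p.2 ∈ Ioc 0 L := by
      rw [ae_iff]
      have hset : {p : Ω × ℝ | ¬ p.2 ∈ Ioc 0 L} = univ ×ˢ (Ioc 0 L)ᶜ := by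
        ext p; simp
      rw [hset, Measure.prod_prod]
      have hν0 : ν (Ioc 0 L)ᶜ = 0 := by
        rw [hν, Measure.restrict_apply measurableSet_Ioc.compl, compl_inter_self,
          measure_empty]
      rw [hν0, mul_zero]
    filter_upwards [hae] with p hp
    have huf : Function.uncurry F p = if p.2 ≤ min (T p.1) (C p.1)
        then lam p.2 / (S p.2 * G p.2) else 0 := rfl
    rw [huf]
    by_cases h : p.2 ≤ min (T p.1) (C p.1)
    · rw [if_pos h]
      exact hMg p.2 ⟨le_of_lt hp.1, le_trans hp.2 hLt⟩
    · rw [if_neg h, norm_zero]; exact hMg0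
  have hFint : Integrable (Function.uncurry F) (μ.prod ν) :=
    ⟨hFumeas.aestronglyMeasurable, HasFiniteIntegral.of_bounded hFae⟩
  have hW₂int : Integrable (fun ω => ∫ u, F ω u ∂ν) μ := hFint.integral_prod_left
  have hYtail : ∀ u, (μ {ω | u ≤ min (T ω) (C ω)}).toReal = S₀ u * G₀ u := by
    intro u
    have hset : {ω | u ≤ min (T ω) (C ω)} = T ⁻¹' Ici u ∩ C ⁻¹' Ici u := by
      ext ω
      simp [le_min_iff, mem_Ici]
    rw [hset, hind.measure_inter_preimage_eq_mul _ _ measurableSet_Ici measurableSet_Ici,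
      ENNReal.toReal_mul]
    have h1 : T ⁻¹' Ici u = {ω | u ≤ T ω} := rfl
    have h2 : C ⁻¹' Ici u = {ω | u ≤ C ω} := rfl
    rw [h1, h2, hS₀tail, hG₀tail]
  have hEW₂ : ∫ ω, (∫ u, F ω u ∂ν) ∂μ
      = ∫ u in (0:ℝ)..L, lam u / (S u * G u) * (S₀ u * G₀ u) := by
    rw [integral_integral_swap hFint]
    have hinner : ∀ u, (∫ ω, F ω u ∂μ) = lam u / (S u * G u) * (S₀ u * G₀ u) := by
      intro u
      have hindic : (fun ω => F ω u)
          = {ω | u ≤ min (T ω) (C ω)}.indicator (fun _ => lam u / (S u * G u)) := by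
        funext ω
        simp only [hF, indicator_apply, mem_setOf_eq]
      rw [hindic, integral_indicator (measurableSet_le measurable_const hYmeas),
        setIntegral_const, measureReal_def, hYtail, smul_eq_mul, mul_comm]
    rw [integral_congr_ae (ae_of_all _ hinner), hν, ← intervalIntegral.integral_of_le hL0]
  -- assembling the left-hand side
  have hlhs : (∫ ω, S L * (1 - ((if min (T ω) (C ω) ≤ L ∧ T ω ≤ C ω then
        1 / (S (min (T ω) (C ω)) * G (min (T ω) (C ω))) else 0)
      - ∫ u in (0:ℝ)..(min L (min (T ω) (C ω))), lam u / (S u * G u))) ∂μ)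
      = S L * (1 - (∫ u in (0:ℝ)..L, f₀ u * (1 / (S u * G u) * G₀ u))
          + (∫ u in (0:ℝ)..L, lam u / (S u * G u) * (S₀ u * G₀ u))) := by
    have hre : ∀ ω, S L * (1 - ((if min (T ω) (C ω) ≤ L ∧ T ω ≤ C ω then
        1 / (S (min (T ω) (C ω)) * G (min (T ω) (C ω))) else 0)
      - ∫ u in (0:ℝ)..(min L (min (T ω) (C ω))), lam u / (S u * G u)))
        = S L * (1 - (k (T ω, C ω) - ∫ u, F ω u ∂ν)) := by
      intro ω
      rw [hW₁eq ω, hW₂eq ω]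
    rw [integral_congr_ae (ae_of_all _ hre), MeasureTheory.integral_const_mul]
    congr 1
    rw [integral_sub (f := fun _ => (1:ℝ)) (g := fun ω => k (T ω, C ω) - ∫ u, F ω u ∂ν)
      (integrable_const 1) (hW₁int.sub hW₂int),
      integral_sub (f := fun ω => k (T ω, C ω)) (g := fun ω => ∫ u, F ω u ∂ν) hW₁int hW₂int,
      integral_const, measureReal_def, measure_univ, ENNReal.toReal_one, one_smul, hEW₁, hEW₂]
    ring
  -- assembling the right-hand side
  have hSL : S L ≠ 0 := ne_of_gt (hSpos L)
  have hbint : IntervalIntegrable (fun u => f₀ u * (1 / (S u * G u) * G₀ u)) volume 0 L := by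
    apply ContinuousOn.intervalIntegrable
    rw [uIcc_of_le hL0]
    exact (hf₀_cont.continuousOn.mul ((hbcontOn.mono hIccsub).mul hG₀cont.continuousOn))
  have hgint : IntervalIntegrable (fun u => lam u / (S u * G u) * (S₀ u * G₀ u)) volume 0 L := by
    apply ContinuousOn.intervalIntegrable
    rw [uIcc_of_le hL0]
    exact ((hgcontOn.mono hIccsub).mul (hS₀cont.continuousOn.mul hG₀cont.continuousOn))
  have hcint : IntervalIntegrable (fun u => (f₀ u - S₀ u * lam u) / S u) volume 0 L :=
    Continuous.intervalIntegrable ((hf₀_cont.sub (hS₀cont.mul hlam_cont)).div hScont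
      (fun u => ne_of_gt (hSpos u))) _ _
  have hC3 := stepC f₀ lam S₀ S hf₀_cont hlam_cont hS₀F hS L
  have hrhs : (∫ u in (0:ℝ)..L, (S₀ u / S u) * (G₀ u / G u - 1) * (lam u - lam₀ u))
      = (∫ u in (0:ℝ)..L, lam u / (S u * G u) * (S₀ u * G₀ u))
        - (∫ u in (0:ℝ)..L, f₀ u * (1 / (S u * G u) * G₀ u))
        + (1 - S₀ L / S L) := by
    rw [← hC3, ← intervalIntegral.integral_sub hgint hbint,
      ← intervalIntegral.integral_add (hgint.sub hbint) hcint]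
    refine intervalIntegral.integral_congr fun u hu => ?_
    rw [uIcc_of_le hL0] at hu
    have hS₀u : S₀ u ≠ 0 := ne_of_gt (hS₀pos u (hIccsub hu))
    have hGu : G u ≠ 0 := ne_of_gt (hGpos u (hIccsub hu))
    have hSu : S u ≠ 0 := ne_of_gt (hSpos u)
    rw [hlam₀]
    field_simp
    ring
  rw [hlhs, hrhs]
  field_simp
  ring
end

section
/- Under the setup of the preceding bias formula, the estimator is doubly robust: if either λ = λ₀ (equivalently S = S₀) or G = G₀ on [0, L], then E[φ(Y, Δ)] = S₀(L) = P(T > L). -/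
open MeasureTheory ProbabilityTheory

lemma surv_no_atom {Ω : Type*} [MeasurableSpace Ω] (μ : Measure Ω) [IsFiniteMeasure μ]
    (X : Ω → ℝ) (hX : Measurable X) (W : ℝ → ℝ) (hWc : Continuous W)
    (hW : ∀ u, W u = (μ {ω | u < X ω}).toReal) (u : ℝ) :
    μ {ω | X ω = u} = 0 := by
  have hsub : ∀ δ > (0:ℝ), (μ {ω | X ω = u}).toReal ≤ W (u - δ) - W u := by
    intro δ hδ
    have h1 : {ω | u < X ω} ⊆ {ω | u - δ < X ω} := by intro ω h; simp only [Set.mem_setOf_eq] at *; linarith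
    have h2 : {ω | X ω = u} ⊆ {ω | u - δ < X ω} \ {ω | u < X ω} := by
      intro ω h
      simp only [Set.mem_diff, Set.mem_setOf_eq] at *
      constructor
      · rw [h]; linarith
      · rw [h]; exact lt_irrefl u
    have hm1 : MeasurableSet {ω | u < X ω} := measurableSet_lt measurable_const hX
    have hdiff : μ ({ω | u - δ < X ω} \ {ω | u < X ω})
        = μ {ω | u - δ < X ω} - μ {ω | u < X ω} :=
      measure_diff h1 hm1.nullMeasurableSet (measure_ne_top μ _)
    have := measure_mono (μ := μ) h2
    rw [hdiff] at this
    have h3 : (μ {ω | X ω = u}).toReal ≤ (μ {ω | u - δ < X ω} - μ {ω | u < X ω}).toReal :=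
      ENNReal.toReal_mono (by simp [ne_eq, ENNReal.sub_eq_top_iff, measure_ne_top]) this
    rw [ENNReal.toReal_sub_of_le (measure_mono h1) (measure_ne_top μ _)] at h3
    rw [hW, hW]
    exact h3
  have htend : Filter.Tendsto (fun δ : ℝ => W (u - δ) - W u)
      (nhdsWithin 0 (Set.Ioi 0)) (nhds 0) := by
    have : Filter.Tendsto (fun δ : ℝ => W (u - δ) - W u) (nhds 0) (nhds (W (u - 0) - W u)) := by
      exact ((hWc.comp (continuous_const.sub continuous_id)).sub continuous_const).tendsto 0
    simpa using this.mono_left nhdsWithin_le_nhds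
  have hev : ∀ᶠ δ in nhdsWithin 0 (Set.Ioi 0), (μ {ω | X ω = u}).toReal ≤ W (u - δ) - W u :=
    Filter.mem_of_superset self_mem_nhdsWithin (fun δ hδ => hsub δ hδ)
  have hle : (μ {ω | X ω = u}).toReal ≤ 0 := ge_of_tendsto htend hev
  have : (μ {ω | X ω = u}).toReal = 0 :=
    le_antisymm hle ENNReal.toReal_nonneg
  exact (ENNReal.toReal_eq_zero_iff _).mp this |>.resolve_right (measure_ne_top μ _)

lemma surv_closed {Ω : Type*} [MeasurableSpace Ω] (μ : Measure Ω) [IsFiniteMeasure μ]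
    (X : Ω → ℝ) (hX : Measurable X) (W : ℝ → ℝ) (hWc : Continuous W)
    (hW : ∀ u, W u = (μ {ω | u < X ω}).toReal) (u : ℝ) :
    (μ {ω | u ≤ X ω}).toReal = W u := by
  have h0 := surv_no_atom μ X hX W hWc hW u
  have : {ω | u ≤ X ω} = {ω | u < X ω} ∪ {ω | X ω = u} := by
    ext ω; simp only [Set.mem_setOf_eq, Set.mem_union]
    constructor
    · intro h; rcases eq_or_lt_of_le h with h | h
      · exact Or.inr h.symm
      · exact Or.inl h
    · rintro (h | h)
      · exact le_of_lt h
      · exact le_of_eq h.symm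
  have hmeq : μ {ω | u ≤ X ω} = μ {ω | u < X ω} := by
    rw [this]
    refine le_antisymm ?_ (measure_mono Set.subset_union_left)
    calc μ ({ω | u < X ω} ∪ {ω | X ω = u}) ≤ μ {ω | u < X ω} + μ {ω | X ω = u} :=
          measure_union_le _ _
      _ = μ {ω | u < X ω} := by rw [h0, add_zero]
  rw [hW, hmeq]

/-- Double robustness for the uncentered influence function with candidate nuisances `S`
(generated by hazard `lam`) and `G`:
`E[φ(Y,Δ)] - S₀(L) = S(L) ∫₀ᴸ (S₀(u)/S(u)) (G₀(u)/G(u) - 1) (lam(u) - lam₀(u)) du`. -/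
theorem stmt10 {Ω : Type*} [MeasurableSpace Ω] (μ : Measure Ω) [IsProbabilityMeasure μ]
    (T C : Ω → ℝ) (hT : Measurable T) (hC : Measurable C)
    (hTnn : ∀ ω, 0 ≤ T ω) (hCnn : ∀ ω, 0 ≤ C ω)
    (hind : IndepFun T C μ)
    (f₀ : ℝ → ℝ) (hf₀_cont : Continuous f₀) (hf₀_nn : ∀ u, 0 ≤ f₀ u)
    (hdens : ∀ s : ℝ, (μ {ω | T ω ≤ s}).toReal = ∫ u in Set.Iic s, f₀ u)
    (S₀ G₀ lam₀ : ℝ → ℝ)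
    (hS₀ : ∀ u, S₀ u = (μ {ω | u < T ω}).toReal)
    (hG₀ : ∀ u, G₀ u = (μ {ω | u < C ω}).toReal)
    (hlam₀ : ∀ u, lam₀ u = f₀ u / S₀ u)
    (hG₀cont : Continuous G₀)
    (t₀ : ℝ) (ht₀ : 0 < t₀) (hS₀pos : ∀ u ∈ Set.Icc 0 t₀, 0 < S₀ u)
    (hG₀pos : ∀ u ∈ Set.Icc 0 t₀, 0 < G₀ u)
    (lam : ℝ → ℝ) (hlam_cont : Continuous lam) (hlam_nn : ∀ u, 0 ≤ lam u)
    (S : ℝ → ℝ) (hS : ∀ u, S u = Real.exp (-∫ v in (0:ℝ)..u, lam v))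
    (G : ℝ → ℝ) (hGcont : Continuous G) (hGpos : ∀ u ∈ Set.Icc 0 t₀, 0 < G u)
    (L : ℝ) (hL : L ∈ Set.Icc 0 t₀)
    (hdr : (∀ u ∈ Set.Icc (0:ℝ) L, lam u = lam₀ u) ∨ (∀ u ∈ Set.Icc (0:ℝ) L, G u = G₀ u)) :
    (∫ ω, S L * (1 - ((if min (T ω) (C ω) ≤ L ∧ T ω ≤ C ω then
        1 / (S (min (T ω) (C ω)) * G (min (T ω) (C ω))) else 0)
      - ∫ u in (0:ℝ)..(min L (min (T ω) (C ω))), lam u / (S u * G u))) ∂μ)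
      = (μ {ω | L < T ω}).toReal := by
  obtain ⟨hL0, hLt⟩ := hL
  -- primitive derivative helper
  have hprim : ∀ (g : ℝ → ℝ), Continuous g → ∀ x : ℝ,
      HasDerivAt (fun u => ∫ t in (0:ℝ)..u, g t) (g x) x := by
    intro g hg x
    exact intervalIntegral.integral_hasDerivAt_right (hg.intervalIntegrable 0 x)
      (hg.stronglyMeasurableAtFilter _ _) hg.continuousAt
  have hprimcont : ∀ (g : ℝ → ℝ), Continuous g →
      Continuous (fun u => ∫ t in (0:ℝ)..u, g t) := by
    intro g hg
    exact continuous_iff_continuousAt.mpr fun x => (hprim g hg x).continuousAt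
  have hSpos : ∀ u, 0 < S u := fun u => by rw [hS]; exact Real.exp_pos _
  have hScont : Continuous S := by
    have : Continuous (fun u => Real.exp (-∫ v in (0:ℝ)..u, lam v)) :=
      (Real.continuous_exp.comp (hprimcont lam hlam_cont).neg)
    exact (funext hS : S = _) ▸ this
  -- integrability of f₀ on each Iic s
  have hTle : ∀ s : ℝ, s < 0 → μ {ω | T ω ≤ s} = 0 := by
    intro s hs
    have : {ω | T ω ≤ s} = ∅ := by
      ext ω; simp only [Set.mem_setOf_eq, Set.mem_empty_iff_false, iff_false, not_le]
      exact lt_of_lt_of_le hs (hTnn ω)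
    rw [this, measure_empty]
  have hunion : (⋃ n : ℕ, {ω | T ω ≤ (n:ℝ)}) = Set.univ := by
    ext ω; simp only [Set.mem_iUnion, Set.mem_setOf_eq, Set.mem_univ, iff_true]
    exact exists_nat_ge (T ω)
  have hex : ∃ n : ℕ, 0 < μ {ω | T ω ≤ (n:ℝ)} := by
    by_contra h
    push_neg at h
    have h0 : ∀ n : ℕ, μ {ω | T ω ≤ (n:ℝ)} = 0 := fun n => le_antisymm (h n) zero_le
    have : μ (⋃ n : ℕ, {ω | T ω ≤ (n:ℝ)}) = 0 := measure_iUnion_null h0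
    rw [hunion, measure_univ] at this
    exact one_ne_zero this
  obtain ⟨N, hN⟩ := hex
  have hintN : ∀ s : ℝ, (N:ℝ) ≤ s → IntegrableOn f₀ (Set.Iic s) := by
    intro s hNs
    by_contra hni
    have : (μ {ω | T ω ≤ s}).toReal = 0 := by
      rw [hdens s, integral_undef hni]
    have hpos : 0 < μ {ω | T ω ≤ s} :=
      lt_of_lt_of_le hN (measure_mono (fun ω (h : T ω ≤ (N:ℝ)) => le_trans h hNs))
    rw [ENNReal.toReal_eq_zero_iff] at this
    rcases this with h | h
    · exact absurd h (ne_of_gt hpos)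
    · exact absurd h (measure_ne_top μ _)
  have hint : ∀ s : ℝ, IntegrableOn f₀ (Set.Iic s) := by
    intro s
    rcases le_total s (N:ℝ) with h | h
    · exact (hintN N le_rfl).mono_set (Set.Iic_subset_Iic.mpr h)
    · exact hintN s h
  -- f₀ vanishes on negatives
  have hf₀neg : ∀ t : ℝ, t < 0 → f₀ t = 0 := by
    intro t ht
    have hG : ∀ u : ℝ, u < 0 → ∫ x in t..u, f₀ x = 0 := by
      intro u hu
      have h1 : ∫ x in Set.Iic u, f₀ x = 0 := by
        rw [← hdens u, hTle u hu, ENNReal.toReal_zero]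
      have h2 : ∫ x in Set.Iic t, f₀ x = 0 := by
        rw [← hdens t, hTle t ht, ENNReal.toReal_zero]
      rcases le_total t u with h | h
      · rw [intervalIntegral.integral_of_le h]
        have : Set.Iic u = Set.Iic t ∪ Set.Ioc t u := (Set.Iic_union_Ioc_eq_Iic h).symm
        have hd : Disjoint (Set.Iic t) (Set.Ioc t u) := by
          rw [Set.disjoint_left]; intro x hx hx2; exact absurd hx2.1 (not_lt.mpr hx)
        have := setIntegral_union hd measurableSet_Ioc
          ((hint t))
          ((hint u).mono_set (Set.Ioc_subset_Iic_self))
        rw [← Set.Iic_union_Ioc_eq_Iic h, this] at h1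
        linarith
      · rw [intervalIntegral.integral_of_ge h]
        have hd : Disjoint (Set.Iic u) (Set.Ioc u t) := by
          rw [Set.disjoint_left]; intro x hx hx2; exact absurd hx2.1 (not_lt.mpr hx)
        have := setIntegral_union hd measurableSet_Ioc
          ((hint u))
          ((hint t).mono_set (Set.Ioc_subset_Iic_self))
        rw [← Set.Iic_union_Ioc_eq_Iic h] at h2
        rw [this] at h2
        rw [h1] at h2
        simp only [zero_add] at h2
        rw [h2, neg_zero]
    have hd : HasDerivAt (fun u => ∫ x in t..u, f₀ x) (f₀ t) t := by
      exact intervalIntegral.integral_hasDerivAt_right (hf₀_cont.intervalIntegrable t t)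
        (hf₀_cont.stronglyMeasurableAtFilter _ _) hf₀_cont.continuousAt
    have hzero : HasDerivAt (fun u => ∫ x in t..u, f₀ x) 0 t := by
      have : (fun u => ∫ x in t..u, f₀ x) =ᶠ[nhds t] (fun _ => (0:ℝ)) := by
        have hmem : Set.Iio (0:ℝ) ∈ nhds t := Iio_mem_nhds ht
        filter_upwards [hmem] with u hu
        exact hG u hu
      exact (hasDerivAt_const t (0:ℝ)).congr_of_eventuallyEq this
    have := hd.unique hzero
    linarith [this]
  -- integral over Iic 0 is zero
  have hIic0 : ∫ t in Set.Iic (0:ℝ), f₀ t = 0 := by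
    have h1 : ∫ t in Set.Iio (0:ℝ), f₀ t = 0 := by
      rw [setIntegral_congr_fun measurableSet_Iio (fun x hx => hf₀neg x hx)]
      exact integral_zero _ _
    calc ∫ t in Set.Iic (0:ℝ), f₀ t = ∫ t in Set.Iio (0:ℝ), f₀ t :=
          (setIntegral_congr_set Iio_ae_eq_Iic).symm
      _ = 0 := h1
  -- CDF formula
  have hsplit : ∀ a b : ℝ, a ≤ b → ∫ t in Set.Iic b, f₀ t
      = (∫ t in Set.Iic a, f₀ t) + ∫ t in Set.Ioc a b, f₀ t := by
    intro a b hab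
    have hd : Disjoint (Set.Iic a) (Set.Ioc a b) := by
      rw [Set.disjoint_left]; intro x hx hx2; exact absurd hx2.1 (not_lt.mpr hx)
    rw [← Set.Iic_union_Ioc_eq_Iic hab]
    exact setIntegral_union hd measurableSet_Ioc (hint a)
      ((hint b).mono_set Set.Ioc_subset_Iic_self)
  have hF : ∀ u : ℝ, (μ {ω | T ω ≤ u}).toReal = ∫ t in (0:ℝ)..u, f₀ t := by
    intro u
    rcases le_or_gt 0 u with h | h
    · rw [hdens u, hsplit 0 u h, hIic0, zero_add, intervalIntegral.integral_of_le h]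
    · rw [hTle u h, ENNReal.toReal_zero, intervalIntegral.integral_of_ge (le_of_lt h)]
      have : ∫ t in Set.Ioc u 0, f₀ t = 0 := by
        have h2 : ∫ t in Set.Ioo u (0:ℝ), f₀ t = 0 := by
          rw [setIntegral_congr_fun measurableSet_Ioo (fun x hx => hf₀neg x hx.2)]
          exact integral_zero _ _
        calc ∫ t in Set.Ioc u (0:ℝ), f₀ t = ∫ t in Set.Ioo u (0:ℝ), f₀ t :=
              (setIntegral_congr_set Ioo_ae_eq_Ioc).symm
          _ = 0 := h2
      rw [this, neg_zero]
  -- survival function formula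
  have hS₀eq : ∀ u : ℝ, S₀ u = 1 - ∫ t in (0:ℝ)..u, f₀ t := by
    intro u
    have hmeas : MeasurableSet {ω | T ω ≤ u} := measurableSet_le hT measurable_const
    have hcompl : {ω | u < T ω} = {ω | T ω ≤ u}ᶜ := by
      ext ω; simp [not_le]
    have h1 : μ {ω | u < T ω} = 1 - μ {ω | T ω ≤ u} := by
      rw [hcompl, measure_compl hmeas (measure_ne_top μ _), measure_univ]
    rw [hS₀, h1, ENNReal.toReal_sub_of_le prob_le_one ENNReal.one_ne_top, ENNReal.toReal_one,
      hF u]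
  have hS₀cont : Continuous S₀ := by
    have : Continuous (fun u => 1 - ∫ t in (0:ℝ)..u, f₀ t) :=
      continuous_const.sub (hprimcont f₀ hf₀_cont)
    exact (funext hS₀eq : S₀ = _) ▸ this
  have hS₀closed : ∀ u : ℝ, (μ {ω | u ≤ T ω}).toReal = S₀ u :=
    fun u => surv_closed μ T hT S₀ hS₀cont hS₀ u
  have hG₀closed : ∀ u : ℝ, (μ {ω | u ≤ C ω}).toReal = G₀ u :=
    fun u => surv_closed μ C hC G₀ hG₀cont hG₀ u
  have hS₀zero : S₀ 0 = 1 := by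
    rw [hS₀eq, intervalIntegral.integral_same, sub_zero]
  -- the law of T has density f₀
  have hν : μ.map T = volume.withDensity (fun t => ENNReal.ofReal (f₀ t)) := by
    refine MeasureTheory.Measure.ext_of_Iic (μ.map T) _ (fun a => ?_)
    rw [Measure.map_apply hT measurableSet_Iic,
      withDensity_apply _ measurableSet_Iic]
    have hpre : T ⁻¹' Set.Iic a = {ω | T ω ≤ a} := rfl
    rw [hpre]
    have h1 : ∫⁻ t in Set.Iic a, ENNReal.ofReal (f₀ t)
        = ENNReal.ofReal (∫ t in Set.Iic a, f₀ t) :=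
      (ofReal_integral_eq_lintegral_ofReal (hint a)
        (Filter.Eventually.of_forall (fun t => hf₀_nn t))).symm
    rw [h1, ← hdens a, ENNReal.ofReal_toReal (measure_ne_top μ _)]
  have htransfer : ∀ g : ℝ → ℝ, (∫ t, g t ∂(μ.map T)) = ∫ t, f₀ t * g t := by
    intro g
    rw [hν]
    have hmeas : Measurable (fun t => Real.toNNReal (f₀ t)) :=
      measurable_real_toNNReal.comp hf₀_cont.measurable
    have heq : (fun t => ENNReal.ofReal (f₀ t))
        = (fun t => ((f₀ t).toNNReal : ENNReal)) := rfl
    rw [heq, integral_withDensity_eq_integral_smul hmeas g]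
    congr 1
    ext t
    simp [NNReal.smul_def, Real.coe_toNNReal _ (hf₀_nn t)]
  -- lower bound for S*G on [0,t₀]
  obtain ⟨x₀, hx₀mem, hx₀min⟩ : ∃ x₀ ∈ Set.Icc (0:ℝ) t₀, ∀ u ∈ Set.Icc (0:ℝ) t₀,
      S x₀ * G x₀ ≤ S u * G u := by
    obtain ⟨x₀, hx₀, hmin⟩ := isCompact_Icc.exists_isMinOn (Set.nonempty_Icc.mpr (le_of_lt ht₀))
      ((hScont.mul hGcont).continuousOn)
    exact ⟨x₀, hx₀, fun u hu => hmin hu⟩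
  set c₀ : ℝ := S x₀ * G x₀ with hc₀def
  have hc₀pos : 0 < c₀ := mul_pos (hSpos x₀) (hGpos x₀ hx₀mem)
  have hc₀le : ∀ u ∈ Set.Icc (0:ℝ) t₀, c₀ ≤ S u * G u := hx₀min
  -- the function F2 for E[A]
  set F2 : ℝ × ℝ → ℝ :=
    fun p => if 0 ≤ p.1 ∧ p.1 ≤ L ∧ p.1 ≤ p.2 then (S p.1 * G p.1)⁻¹ else 0 with hF2def
  have hF2meas : Measurable F2 := by
    have hset : MeasurableSet {p : ℝ × ℝ | 0 ≤ p.1 ∧ p.1 ≤ L ∧ p.1 ≤ p.2} := by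
      have h1 : MeasurableSet {p : ℝ × ℝ | 0 ≤ p.1} :=
        measurableSet_le measurable_const measurable_fst
      have h2 : MeasurableSet {p : ℝ × ℝ | p.1 ≤ L} :=
        measurableSet_le measurable_fst measurable_const
      have h3 : MeasurableSet {p : ℝ × ℝ | p.1 ≤ p.2} :=
        measurableSet_le measurable_fst measurable_snd
      exact (h1.inter (h2.inter h3) : _)
    exact Measurable.ite hset
      (((hScont.comp continuous_fst).mul (hGcont.comp continuous_fst)).measurable.inv)
      measurable_const
  have hF2bdd : ∀ p : ℝ × ℝ, ‖F2 p‖ ≤ c₀⁻¹ := by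
    intro p
    simp only [hF2def]
    by_cases h : 0 ≤ p.1 ∧ p.1 ≤ L ∧ p.1 ≤ p.2
    · simp only [if_pos h]
      have hmem : p.1 ∈ Set.Icc (0:ℝ) t₀ := ⟨h.1, le_trans h.2.1 hLt⟩
      have hge : c₀ ≤ S p.1 * G p.1 := hc₀le p.1 hmem
      rw [Real.norm_eq_abs, abs_of_nonneg (inv_nonneg.mpr (le_trans (le_of_lt hc₀pos) hge))]
      exact inv_anti₀ hc₀pos hge
    · simp only [if_neg h, norm_zero]
      exact inv_nonneg.mpr (le_of_lt hc₀pos)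
  have hAeq : ∀ ω, (if min (T ω) (C ω) ≤ L ∧ T ω ≤ C ω then
      1 / (S (min (T ω) (C ω)) * G (min (T ω) (C ω))) else 0) = F2 (T ω, C ω) := by
    intro ω
    simp only [hF2def]
    by_cases h : T ω ≤ C ω
    · rw [min_eq_left h]
      by_cases h2 : T ω ≤ L
      · rw [if_pos ⟨h2, h⟩, if_pos ⟨hTnn ω, h2, h⟩, one_div]
      · rw [if_neg (fun hc => h2 hc.1), if_neg (fun hc => h2 hc.2.1)]
    · rw [if_neg (fun hc => h hc.2), if_neg (fun hc => h hc.2.2)]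
  haveI : IsProbabilityMeasure (μ.map T) := Measure.isProbabilityMeasure_map hT.aemeasurable
  haveI : IsProbabilityMeasure (μ.map C) := Measure.isProbabilityMeasure_map hC.aemeasurable
  have hmapprod : μ.map (fun ω => (T ω, C ω)) = (μ.map T).prod (μ.map C) :=
    (indepFun_iff_map_prod_eq_prod_map_map hT.aemeasurable hC.aemeasurable).mp hind
  have hAmap : ∫ ω, F2 (T ω, C ω) ∂μ = ∫ p, F2 p ∂((μ.map T).prod (μ.map C)) := by
    rw [← hmapprod, integral_map (hT.prodMk hC).aemeasurable hF2meas.aestronglyMeasurable]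
  have hF2int : Integrable F2 ((μ.map T).prod (μ.map C)) :=
    Integrable.mono' (integrable_const c₀⁻¹) hF2meas.aestronglyMeasurable
      (Filter.Eventually.of_forall hF2bdd)
  have hAiter : ∫ p, F2 p ∂((μ.map T).prod (μ.map C))
      = ∫ t, ∫ c, F2 (t, c) ∂(μ.map C) ∂(μ.map T) := integral_prod F2 hF2int
  have hinner : ∀ t : ℝ, ∫ c, F2 (t, c) ∂(μ.map C)
      = (if 0 ≤ t ∧ t ≤ L then f₀ t * 0 + G₀ t * (S t * G t)⁻¹ else 0) := by
    intro t
    by_cases ht : 0 ≤ t ∧ t ≤ L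
    · have heq2 : (fun c => F2 (t, c))
          = Set.indicator (Set.Ici t) (fun _ => (S t * G t)⁻¹) := by
        ext c
        simp only [hF2def, Set.indicator_apply, Set.mem_Ici]
        by_cases hc : t ≤ c
        · rw [if_pos ⟨ht.1, ht.2, hc⟩, if_pos hc]
        · rw [if_neg (fun hcc => hc hcc.2.2), if_neg hc]
      rw [heq2, integral_indicator_const _ measurableSet_Ici, if_pos ht]
      have : (μ.map C) (Set.Ici t) = μ {ω | t ≤ C ω} := by
        rw [Measure.map_apply hC measurableSet_Ici]; rfl
      rw [measureReal_def, this, smul_eq_mul, hG₀closed t]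
      ring
    · have hzero : ∀ c, F2 (t, c) = 0 := by
        intro c
        simp only [hF2def]
        rw [if_neg (fun hc => ht ⟨hc.1, hc.2.1⟩)]
      rw [if_neg ht]
      simp only [hzero, integral_zero]
  have hIA : ∫ ω, F2 (T ω, C ω) ∂μ
      = ∫ t in (0:ℝ)..L, f₀ t * (G₀ t * (S t * G t)⁻¹) := by
    rw [hAmap, hAiter]
    have h1 : ∫ t, ∫ c, F2 (t, c) ∂(μ.map C) ∂(μ.map T)
        = ∫ t, f₀ t * (if 0 ≤ t ∧ t ≤ L then G₀ t * (S t * G t)⁻¹ else 0) := by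
      rw [show (fun t => ∫ c, F2 (t, c) ∂(μ.map C))
          = fun t => (if 0 ≤ t ∧ t ≤ L then f₀ t * 0 + G₀ t * (S t * G t)⁻¹ else 0)
          from funext hinner]
      rw [htransfer]
      congr 1; ext t
      by_cases ht : 0 ≤ t ∧ t ≤ L
      · rw [if_pos ht, if_pos ht]; ring
      · rw [if_neg ht, if_neg ht, mul_zero]
    rw [h1]
    have h2 : (fun t => f₀ t * (if 0 ≤ t ∧ t ≤ L then G₀ t * (S t * G t)⁻¹ else 0))
        = Set.indicator (Set.Icc 0 L) (fun t => f₀ t * (G₀ t * (S t * G t)⁻¹)) := by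
      ext t
      by_cases ht : t ∈ Set.Icc (0:ℝ) L
      · rw [Set.indicator_of_mem ht, if_pos ⟨ht.1, ht.2⟩]
      · rw [Set.indicator_of_notMem ht, if_neg (fun hc => ht ⟨hc.1, hc.2⟩), mul_zero]
    rw [h2, integral_indicator measurableSet_Icc, integral_Icc_eq_integral_Ioc,
      intervalIntegral.integral_of_le hL0]
  have hAintμ : Integrable (fun ω => F2 (T ω, C ω)) μ :=
    Integrable.mono' (integrable_const c₀⁻¹)
      ((hF2meas.comp (hT.prodMk hC)).aestronglyMeasurable)
      (Filter.Eventually.of_forall (fun ω => hF2bdd _))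
  -- E[B] computation
  set q : ℝ → ℝ := fun u => lam u / (S u * G u) with hqdef
  have hqmeas : Measurable q := hlam_cont.measurable.div (hScont.mul hGcont).measurable
  obtain ⟨Mq, hMq⟩ : ∃ M : ℝ, ∀ u ∈ Set.Icc (0:ℝ) t₀, ‖q u‖ ≤ M := by
    have hqcont : ContinuousOn q (Set.Icc 0 t₀) := by
      apply ContinuousOn.div hlam_cont.continuousOn (hScont.mul hGcont).continuousOn
      exact fun u hu => ne_of_gt (lt_of_lt_of_le hc₀pos (hc₀le u hu))
    exact isCompact_Icc.exists_bound_of_continuousOn hqcont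
  have hMqnn : 0 ≤ Mq := le_trans (norm_nonneg _) (hMq 0 ⟨le_refl 0, le_of_lt ht₀⟩)
  set K : Ω × ℝ → ℝ :=
    fun p => if p.2 ≤ min (T p.1) (C p.1) ∧ 0 < p.2 ∧ p.2 ≤ L then q p.2 else 0 with hKdef
  have hKmeas : Measurable K := by
    have hset : MeasurableSet {p : Ω × ℝ | p.2 ≤ min (T p.1) (C p.1) ∧ 0 < p.2 ∧ p.2 ≤ L} := by
      have h1 : MeasurableSet {p : Ω × ℝ | p.2 ≤ min (T p.1) (C p.1)} :=
        measurableSet_le measurable_snd ((hT.min hC).comp measurable_fst)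
      have h2 : MeasurableSet {p : Ω × ℝ | 0 < p.2} :=
        measurableSet_lt measurable_const measurable_snd
      have h3 : MeasurableSet {p : Ω × ℝ | p.2 ≤ L} :=
        measurableSet_le measurable_snd measurable_const
      exact (h1.inter (h2.inter h3) : _)
    exact Measurable.ite hset (hqmeas.comp measurable_snd) measurable_const
  have hKbdd : ∀ p : Ω × ℝ, ‖K p‖ ≤ Mq := by
    intro p
    simp only [hKdef]
    by_cases h : p.2 ≤ min (T p.1) (C p.1) ∧ 0 < p.2 ∧ p.2 ≤ L
    · rw [if_pos h]
      exact hMq p.2 ⟨le_of_lt h.2.1, le_trans h.2.2 hLt⟩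
    · rw [if_neg h, norm_zero]; exact hMqnn
  have hB1 : ∀ ω, (∫ u in (0:ℝ)..(min L (min (T ω) (C ω))), lam u / (S u * G u))
      = ∫ u in Set.Ioc 0 L, K (ω, u) := by
    intro ω
    have hYnn : (0:ℝ) ≤ min (T ω) (C ω) := le_min (hTnn ω) (hCnn ω)
    have h0 : (0:ℝ) ≤ min L (min (T ω) (C ω)) := le_min hL0 hYnn
    rw [intervalIntegral.integral_of_le h0]
    have hseteq : Set.Ioc (0:ℝ) (min L (min (T ω) (C ω)))
        = Set.Ioc 0 L ∩ Set.Iic (min (T ω) (C ω)) := by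
      ext u
      simp only [Set.mem_Ioc, Set.mem_inter_iff, Set.mem_Iic, le_min_iff]
      tauto
    rw [hseteq, ← setIntegral_indicator measurableSet_Iic]
    refine setIntegral_congr_fun measurableSet_Ioc (fun u hu => ?_)
    simp only [hKdef, Set.indicator_apply, Set.mem_Iic]
    by_cases h : u ≤ min (T ω) (C ω)
    · rw [if_pos h, if_pos ⟨h, hu.1, hu.2⟩]
    · rw [if_neg h, if_neg (fun hc => h hc.1)]
  haveI : IsFiniteMeasure (volume.restrict (Set.Ioc (0:ℝ) L)) := by
    constructor
    rw [Measure.restrict_apply_univ, Real.volume_Ioc]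
    exact ENNReal.ofReal_lt_top
  have hKint : Integrable K (μ.prod (volume.restrict (Set.Ioc (0:ℝ) L))) :=
    Integrable.mono' (integrable_const Mq) hKmeas.aestronglyMeasurable
      (Filter.Eventually.of_forall hKbdd)
  have hswap : ∫ ω, (∫ u in Set.Ioc (0:ℝ) L, K (ω, u)) ∂μ
      = ∫ u in Set.Ioc (0:ℝ) L, (∫ ω, K (ω, u) ∂μ) :=
    integral_integral_swap hKint
  have hinnerB : ∀ u ∈ Set.Ioc (0:ℝ) L, (∫ ω, K (ω, u) ∂μ) = q u * (S₀ u * G₀ u) := by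
    intro u hu
    have heqK : (fun ω => K (ω, u))
        = Set.indicator {ω | u ≤ min (T ω) (C ω)} (fun _ => q u) := by
      ext ω
      simp only [hKdef, Set.indicator_apply, Set.mem_setOf_eq]
      by_cases h : u ≤ min (T ω) (C ω)
      · rw [if_pos ⟨h, hu.1, hu.2⟩, if_pos h]
      · rw [if_neg (fun hc => h hc.1), if_neg h]
    rw [heqK, integral_indicator_const _ (measurableSet_le measurable_const (hT.min hC))]
    have hsplit2 : {ω | u ≤ min (T ω) (C ω)} = T ⁻¹' Set.Ici u ∩ C ⁻¹' Set.Ici u := by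
      ext ω
      simp only [Set.mem_setOf_eq, le_min_iff, Set.mem_inter_iff, Set.mem_preimage,
        Set.mem_Ici]
    rw [measureReal_def, hsplit2, hind.measure_inter_preimage_eq_mul _ _ measurableSet_Ici measurableSet_Ici,
      ENNReal.toReal_mul]
    have e1 : (μ (T ⁻¹' Set.Ici u)).toReal = S₀ u := hS₀closed u
    have e2 : (μ (C ⁻¹' Set.Ici u)).toReal = G₀ u := hG₀closed u
    rw [e1, e2, smul_eq_mul]
    ring
  have hIB : ∫ ω, (∫ u in (0:ℝ)..(min L (min (T ω) (C ω))), lam u / (S u * G u)) ∂μ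
      = ∫ u in (0:ℝ)..L, q u * (S₀ u * G₀ u) := by
    rw [show (fun ω => ∫ u in (0:ℝ)..(min L (min (T ω) (C ω))), lam u / (S u * G u))
        = fun ω => ∫ u in Set.Ioc (0:ℝ) L, K (ω, u) from funext hB1]
    rw [hswap, intervalIntegral.integral_of_le hL0]
    exact setIntegral_congr_fun measurableSet_Ioc hinnerB
  have hBintμ : Integrable (fun ω =>
      ∫ u in (0:ℝ)..(min L (min (T ω) (C ω))), lam u / (S u * G u)) μ := by
    rw [show (fun ω => ∫ u in (0:ℝ)..(min L (min (T ω) (C ω))), lam u / (S u * G u))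
        = fun ω => ∫ u in Set.Ioc (0:ℝ) L, K (ω, u) from funext hB1]
    exact hKint.integral_prod_left
  -- FTC machinery
  set Eexp : ℝ → ℝ := fun u => Real.exp (∫ v in (0:ℝ)..u, lam v) with hEdef
  have hEpos : ∀ u, 0 < Eexp u := fun u => Real.exp_pos _
  have hSE : ∀ u, S u * Eexp u = 1 := by
    intro u
    rw [hS, hEdef, ← Real.exp_add, neg_add_cancel, Real.exp_zero]
  have hSinv : ∀ u, (S u)⁻¹ = Eexp u :=
    fun u => inv_eq_of_mul_eq_one_right (hSE u)
  set k : ℝ → ℝ := fun u => (1 - ∫ t in (0:ℝ)..u, f₀ t) * Eexp u with hkdef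
  set k' : ℝ → ℝ :=
    fun u => (-(f₀ u) + (1 - ∫ t in (0:ℝ)..u, f₀ t) * lam u) * Eexp u with hk'def
  have hk : ∀ x, HasDerivAt k (k' x) x := by
    intro x
    have h1 : HasDerivAt (fun u => 1 - ∫ t in (0:ℝ)..u, f₀ t) (-(f₀ x)) x :=
      (hprim f₀ hf₀_cont x).const_sub 1
    have h2 : HasDerivAt Eexp (Real.exp (∫ v in (0:ℝ)..x, lam v) * lam x) x :=
      (hprim lam hlam_cont x).exp
    have h3 := h1.mul h2
    convert h3 using 1
    · rfl
    show (-(f₀ x) + (1 - ∫ t in (0:ℝ)..x, f₀ t) * lam x) * Real.exp (∫ v in (0:ℝ)..x, lam v)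
      = -(f₀ x) * Real.exp (∫ v in (0:ℝ)..x, lam v)
        + (1 - ∫ t in (0:ℝ)..x, f₀ t) * (Real.exp (∫ v in (0:ℝ)..x, lam v) * lam x)
    ring
    all_goals rfl
  have hk'cont : Continuous k' := by
    apply Continuous.mul
    · exact hf₀_cont.neg.add ((continuous_const.sub (hprimcont f₀ hf₀_cont)).mul hlam_cont)
    · exact Real.continuous_exp.comp (hprimcont lam hlam_cont)
  have hFTC : ∫ u in (0:ℝ)..L, k' u = k L - k 0 :=
    intervalIntegral.integral_eq_sub_of_hasDerivAt (fun x _ => hk x)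
      (hk'cont.intervalIntegrable 0 L)
  have hk0 : k 0 = 1 := by
    simp only [hkdef, hEdef, intervalIntegral.integral_same, sub_zero, Real.exp_zero, mul_one]
  have hkL : k L = S₀ L * Eexp L := by
    simp only [hkdef]
    rw [← hS₀eq L]
  -- assemble the main integral
  have hgoal : (∫ ω, S L * (1 - ((if min (T ω) (C ω) ≤ L ∧ T ω ≤ C ω then
        1 / (S (min (T ω) (C ω)) * G (min (T ω) (C ω))) else 0)
      - ∫ u in (0:ℝ)..(min L (min (T ω) (C ω))), lam u / (S u * G u))) ∂μ)
      = S L * (1 - ((∫ t in (0:ℝ)..L, f₀ t * (G₀ t * (S t * G t)⁻¹))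
        - ∫ u in (0:ℝ)..L, q u * (S₀ u * G₀ u))) := by
    have hrw : (fun ω => S L * (1 - ((if min (T ω) (C ω) ≤ L ∧ T ω ≤ C ω then
          1 / (S (min (T ω) (C ω)) * G (min (T ω) (C ω))) else 0)
        - ∫ u in (0:ℝ)..(min L (min (T ω) (C ω))), lam u / (S u * G u))))
        = fun ω => S L * (1 - (F2 (T ω, C ω)
        - ∫ u in (0:ℝ)..(min L (min (T ω) (C ω))), lam u / (S u * G u))) := by
      funext ω
      rw [hAeq ω]
    rw [hrw, integral_const_mul]
    congr 1
    have eAB : (∫ ω, (F2 (T ω, C ω)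
        - ∫ u in (0:ℝ)..(min L (min (T ω) (C ω))), lam u / (S u * G u)) ∂μ)
        = (∫ ω, F2 (T ω, C ω) ∂μ) - ∫ ω, (∫ u in (0:ℝ)..(min L (min (T ω) (C ω))),
          lam u / (S u * G u)) ∂μ := integral_sub hAintμ hBintμ
    have eONE : (∫ ω, (1 - (F2 (T ω, C ω)
        - ∫ u in (0:ℝ)..(min L (min (T ω) (C ω))), lam u / (S u * G u))) ∂μ)
        = (∫ (_ : Ω), (1:ℝ) ∂μ) - ∫ ω, (F2 (T ω, C ω)
        - ∫ u in (0:ℝ)..(min L (min (T ω) (C ω))), lam u / (S u * G u)) ∂μ :=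
      integral_sub (integrable_const 1) (hAintμ.sub hBintμ)
    rw [eONE, eAB, integral_const, measureReal_def, measure_univ, ENNReal.toReal_one, one_smul, hIA, hIB]
  rw [hgoal, ← hS₀ L]
  have hSGne : ∀ u ∈ Set.Icc (0:ℝ) L, S u * G u ≠ 0 := by
    intro u hu
    exact ne_of_gt (lt_of_lt_of_le hc₀pos (hc₀le u ⟨hu.1, le_trans hu.2 hLt⟩))
  rcases hdr with hlam | hG
  · -- case lam = lam₀
    have hIAIB : (∫ t in (0:ℝ)..L, f₀ t * (G₀ t * (S t * G t)⁻¹))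
        = ∫ u in (0:ℝ)..L, q u * (S₀ u * G₀ u) := by
      apply intervalIntegral.integral_congr
      intro u hu
      rw [Set.uIcc_of_le hL0] at hu
      have hS₀ne : S₀ u ≠ 0 := ne_of_gt (hS₀pos u ⟨hu.1, le_trans hu.2 hLt⟩)
      have hlu : lam u = f₀ u / S₀ u := by rw [hlam u hu, hlam₀]
      have hSG : S u * G u ≠ 0 := hSGne u hu
      simp only [hqdef]
      rw [hlu]
      field_simp
    have hk'zero : ∀ u ∈ Set.uIcc (0:ℝ) L, k' u = (fun _ => (0:ℝ)) u := by
      intro u hu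
      rw [Set.uIcc_of_le hL0] at hu
      have hS₀ne : S₀ u ≠ 0 := ne_of_gt (hS₀pos u ⟨hu.1, le_trans hu.2 hLt⟩)
      have hlu : lam u = f₀ u / S₀ u := by rw [hlam u hu, hlam₀]
      simp only [hk'def]
      rw [hlu, ← hS₀eq u]
      rw [mul_div_cancel₀ _ hS₀ne]
      ring
    have hkLeq : k L = 1 := by
      have h0 : ∫ u in (0:ℝ)..L, k' u = 0 := by
        rw [intervalIntegral.integral_congr hk'zero]
        simp
      rw [hFTC, hk0] at h0
      linarith
    have hSL : S L = S₀ L := by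
      have h1 : S₀ L * Eexp L = 1 := by rw [← hkL, hkLeq]
      have h2 : S L * Eexp L = 1 := hSE L
      exact mul_right_cancel₀ (ne_of_gt (hEpos L)) (h2.trans h1.symm)
    rw [hIAIB, sub_self, sub_zero, mul_one, hSL]
  · -- case G = G₀
    have hint1 : IntervalIntegrable (fun t => f₀ t * Eexp t) volume 0 L :=
      (hf₀_cont.mul (Real.continuous_exp.comp (hprimcont lam hlam_cont))).intervalIntegrable 0 L
    have hint2 : IntervalIntegrable
        (fun t => (1 - ∫ v in (0:ℝ)..t, f₀ v) * lam t * Eexp t) volume 0 L :=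
      (((continuous_const.sub (hprimcont f₀ hf₀_cont)).mul hlam_cont).mul
        (Real.continuous_exp.comp (hprimcont lam hlam_cont))).intervalIntegrable 0 L
    have hIAc : (∫ t in (0:ℝ)..L, f₀ t * (G₀ t * (S t * G t)⁻¹))
        = ∫ t in (0:ℝ)..L, f₀ t * Eexp t := by
      apply intervalIntegral.integral_congr
      intro u hu
      rw [Set.uIcc_of_le hL0] at hu
      have hu0t : u ∈ Set.Icc (0:ℝ) t₀ := ⟨hu.1, le_trans hu.2 hLt⟩
      have hG₀ne : G₀ u ≠ 0 := ne_of_gt (hG₀pos u hu0t)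
      have hSne : S u ≠ 0 := ne_of_gt (hSpos u)
      show f₀ u * (G₀ u * (S u * G u)⁻¹) = f₀ u * Eexp u
      rw [hG u hu, ← hSinv u]
      field_simp
    have hIBc : (∫ u in (0:ℝ)..L, q u * (S₀ u * G₀ u))
        = ∫ t in (0:ℝ)..L, (1 - ∫ v in (0:ℝ)..t, f₀ v) * lam t * Eexp t := by
      apply intervalIntegral.integral_congr
      intro u hu
      rw [Set.uIcc_of_le hL0] at hu
      have hu0t : u ∈ Set.Icc (0:ℝ) t₀ := ⟨hu.1, le_trans hu.2 hLt⟩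
      have hG₀ne : G₀ u ≠ 0 := ne_of_gt (hG₀pos u hu0t)
      have hSne : S u ≠ 0 := ne_of_gt (hSpos u)
      simp only [hqdef]
      rw [hG u hu, ← hS₀eq u, ← hSinv u]
      field_simp
    have hdiff : (∫ t in (0:ℝ)..L, f₀ t * (G₀ t * (S t * G t)⁻¹))
        - (∫ u in (0:ℝ)..L, q u * (S₀ u * G₀ u)) = 1 - k L := by
      rw [hIAc, hIBc, ← intervalIntegral.integral_sub hint1 hint2]
      have hcongr : ∀ u ∈ Set.uIcc (0:ℝ) L,
          f₀ u * Eexp u - (1 - ∫ v in (0:ℝ)..u, f₀ v) * lam u * Eexp u = -(k' u) := by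
        intro u hu
        simp only [hk'def]
        ring
      have e3 : (∫ u in (0:ℝ)..L, (f₀ u * Eexp u
          - (1 - ∫ v in (0:ℝ)..u, f₀ v) * lam u * Eexp u)) = ∫ u in (0:ℝ)..L, -(k' u) :=
        intervalIntegral.integral_congr hcongr
      rw [e3, intervalIntegral.integral_neg, hFTC, hk0]
      ring
    rw [hdiff, hkL, sub_sub_cancel]
    calc S L * (S₀ L * Eexp L) = (S L * Eexp L) * S₀ L := by ring
      _ = S₀ L := by rw [hSE L, one_mul]
end

section
/- In the right-censored model (T ⊥ C given W = w, T with conditional density f(·|w), survival S₀(·|w), C with continuous conditional survival G₀(·|w), both positive on [0, t₀]), for any t ∈ [0, t₀]: E[ H(min(t, Y), w) − 1{Y ≤ t, Δ = 1} · S₀(Y⁻|w)/(S₀(Y|w) R(Y|w)) | W = w ] = 0, where H(v, w) = ∫₀ᵛ S₀(u⁻|w) F₁(du|w) / (S₀(u|w) R(u|w)²), F₁(u|w) = P(Y ≤ u, Δ=1 | W=w), and R(u|w) = P(Y ≥ u | W=w). In the continuous case this reduces to: E[∫₀^{min(t,Y)} λ₀(u|w)/(S₀(u|w)G₀(u|w))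 du | W=w] = E[1{Y ≤ t, Δ=1}/(S₀(Y|w)G₀(Y|w)) | W=w]. -/
open MeasureTheory ProbabilityTheory

/-- Conditional mean-zero property (continuous case), stated on the probability space
obtained by conditioning on `W = w`:
`E[∫₀^{min(t,Y)} λ₀(u)/(S₀(u)G₀(u)) du] = E[1{Y ≤ t, Δ = 1}/(S₀(Y)G₀(Y))]`. -/
theorem stmt17 {Ω : Type*} [MeasurableSpace Ω] (μ : Measure Ω) [IsProbabilityMeasure μ]
    (T C : Ω → ℝ) (hT : Measurable T) (hC : Measurable C)
    (hTnn : ∀ ω, 0 ≤ T ω) (hCnn : ∀ ω, 0 ≤ C ω)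
    (hind : IndepFun T C μ)
    (f : ℝ → ℝ) (hf_cont : Continuous f) (hf_nn : ∀ u, 0 ≤ f u)
    (hdens : ∀ s : ℝ, (μ {ω | T ω ≤ s}).toReal = ∫ u in Set.Iic s, f u)
    (S₀ G₀ lam₀ : ℝ → ℝ)
    (hS₀ : ∀ u, S₀ u = (μ {ω | u < T ω}).toReal)
    (hG₀ : ∀ u, G₀ u = (μ {ω | u < C ω}).toReal)
    (hlam₀ : ∀ u, lam₀ u = f u / S₀ u)
    (hG₀cont : Continuous G₀)
    (t₀ : ℝ) (ht₀ : 0 < t₀) (hS₀pos : ∀ u ∈ Set.Icc 0 t₀, 0 < S₀ u)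
    (hG₀pos : ∀ u ∈ Set.Icc 0 t₀, 0 < G₀ u)
    (t : ℝ) (ht : t ∈ Set.Icc 0 t₀) :
    (∫ ω, (∫ u in (0:ℝ)..(min t (min (T ω) (C ω))), lam₀ u / (S₀ u * G₀ u)) ∂μ)
      = ∫ ω, (if min (T ω) (C ω) ≤ t ∧ T ω ≤ C ω then
          1 / (S₀ (min (T ω) (C ω)) * G₀ (min (T ω) (C ω))) else 0) ∂μ := by
  classical
  obtain ⟨ht0, htt₀⟩ := ht
  have hY : Measurable fun ω => min (T ω) (C ω) := hT.min hC
  -- integrability of f on all Iic s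
  have hfint : ∀ s : ℝ, IntegrableOn f (Set.Iic s) := by
    have hex0 : ∃ n : ℕ, μ {ω | T ω ≤ (n : ℝ)} ≠ 0 := by
      by_contra hcon
      push_neg at hcon
      have h0 : μ (⋃ n : ℕ, {ω | T ω ≤ (n : ℝ)}) = 0 := measure_iUnion_null hcon
      have huniv : (⋃ n : ℕ, {ω | T ω ≤ (n : ℝ)}) = Set.univ := by
        ext ω
        simp only [Set.mem_iUnion, Set.mem_setOf_eq, Set.mem_univ, iff_true]
        exact exists_nat_ge (T ω)
      rw [huniv, measure_univ] at h0
      exact one_ne_zero h0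
    obtain ⟨n, hn⟩ := hex0
    have hpos : 0 < ∫ u in Set.Iic (n : ℝ), f u := by
      rw [← hdens]
      exact ENNReal.toReal_pos hn (measure_ne_top μ _)
    have h0 : IntegrableOn f (Set.Iic (n : ℝ)) := by
      by_contra hni
      rw [MeasureTheory.integral_undef hni] at hpos
      exact lt_irrefl 0 hpos
    intro s
    rcases le_or_gt s n with h | h
    · exact h0.mono_set (Set.Iic_subset_Iic.mpr h)
    · have h1 : IntegrableOn f (Set.Icc (n : ℝ) s) := hf_cont.integrableOn_Icc
      refine (h0.union h1).mono_set fun x hx => ?_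
      rcases le_or_gt x n with h' | h'
      · exact Or.inl h'
      · exact Or.inr ⟨h'.le, hx⟩
  -- V and its properties
  set V : ℝ → ℝ := fun s => (μ {ω | T ω ≤ s}).toReal with hVdef
  have hVsplit : ∀ a b : ℝ, a ≤ b → V b = V a + ∫ u in Set.Ioc a b, f u := by
    intro a b hab
    have hd : Disjoint (Set.Iic a) (Set.Ioc a b) := Set.Iic_disjoint_Ioc le_rfl
    have := MeasureTheory.setIntegral_union hd measurableSet_Ioc
      ((hfint a)) ((hfint b).mono_set Set.Ioc_subset_Iic_self)
    rw [hVdef]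
    simp only [hdens]
    rw [← Set.Iic_union_Ioc_eq_Iic hab, this]
  have hVcont : Continuous V := by
    have hprim : Continuous fun u => V 0 + ∫ x in (0:ℝ)..u, f x := by
      exact continuous_const.add (intervalIntegral.continuous_primitive
        (fun a b => hf_cont.intervalIntegrable a b) 0)
    have : V = fun u => V 0 + ∫ x in (0:ℝ)..u, f x := by
      funext u
      rcases le_or_gt 0 u with h | h
      · rw [intervalIntegral.integral_of_le h, ← hVsplit 0 u h]
      · have := hVsplit u 0 h.le
        rw [intervalIntegral.integral_symm, intervalIntegral.integral_of_le h.le]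
        rw [this]; ring
    rw [this]; exact hprim
  have hS₀V : ∀ u, S₀ u = 1 - V u := by
    intro u
    have hcompl : {ω | u < T ω} = {ω | T ω ≤ u}ᶜ := by
      ext ω; simp [not_le]
    rw [hS₀, hcompl, measure_compl (show MeasurableSet {ω | T ω ≤ u} from hT measurableSet_Iic) (measure_ne_top μ _),
      measure_univ, ENNReal.toReal_sub_of_le (prob_le_one) ENNReal.one_ne_top, ENNReal.toReal_one,
      hVdef]
  have hS₀cont : Continuous S₀ := by
    have : S₀ = fun u => 1 - V u := funext hS₀V
    rw [this]; exact continuous_const.sub hVcont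
  -- identification of the law of T
  have hmapT : μ.map T = volume.withDensity fun u => ENNReal.ofReal (f u) := by
    haveI : IsProbabilityMeasure (μ.map T) := Measure.isProbabilityMeasure_map hT.aemeasurable
    refine Measure.ext_of_Iic (μ.map T) _ fun a => ?_
    rw [Measure.map_apply hT measurableSet_Iic, withDensity_apply _ measurableSet_Iic]
    have h2 : ∫⁻ u in Set.Iic a, ENNReal.ofReal (f u)
        = ENNReal.ofReal (∫ u in Set.Iic a, f u) :=
      (MeasureTheory.ofReal_integral_eq_lintegral_ofReal (hfint a)
        (Filter.Eventually.of_forall fun u => hf_nn u)).symm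
    rw [h2, ← hdens a, ENNReal.ofReal_toReal (measure_ne_top μ _)]
    rfl
  -- T has no atoms
  have hTIci : ∀ u : ℝ, μ {ω | u ≤ T ω} = μ {ω | u < T ω} := by
    intro u
    have e1 : {ω | u ≤ T ω} = T ⁻¹' Set.Ici u := rfl
    have e2 : {ω | u < T ω} = T ⁻¹' Set.Ioi u := rfl
    rw [e1, e2, ← Measure.map_apply hT measurableSet_Ici,
      ← Measure.map_apply hT measurableSet_Ioi, hmapT,
      withDensity_apply _ measurableSet_Ici, withDensity_apply _ measurableSet_Ioi,
      ← MeasureTheory.restrict_Ioi_eq_restrict_Ici]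
  have hS₀' : ∀ u, (μ {ω | u ≤ T ω}).toReal = S₀ u := by
    intro u; rw [hTIci, hS₀]
  -- C has no atoms
  have hCIci : ∀ u : ℝ, μ {ω | u ≤ C ω} = μ {ω | u < C ω} := by
    intro u
    have hle : μ {ω | u < C ω} ≤ μ {ω | u ≤ C ω} :=
      measure_mono fun ω (h : u < C ω) => le_of_lt h
    have hkey : (μ {ω | u ≤ C ω}).toReal ≤ G₀ u := by
      have hbnd : ∀ n : ℕ, (μ {ω | u ≤ C ω}).toReal ≤ G₀ (u - 1 / (n + 1)) := by
        intro n
        have hsub : {ω | u ≤ C ω} ⊆ {ω | u - 1 / (n + 1) < C ω} := by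
          intro ω hω
          have h1 : (0:ℝ) < 1 / (n + 1) := by positivity
          have h2 : u - 1 / ((n:ℝ) + 1) < u := by linarith
          exact lt_of_lt_of_le h2 hω
        rw [hG₀]
        exact ENNReal.toReal_mono (measure_ne_top μ _) (measure_mono hsub)
      have htend : Filter.Tendsto (fun n : ℕ => G₀ (u - 1 / (n + 1)))
          Filter.atTop (nhds (G₀ u)) := by
        have h1 : Filter.Tendsto (fun n : ℕ => u - 1 / ((n:ℝ) + 1)) Filter.atTop (nhds u) := by
          have := tendsto_one_div_add_atTop_nhds_zero_nat (𝕜 := ℝ)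
          have h2 := Filter.Tendsto.const_sub u this
          simpa using h2
        exact (hG₀cont.tendsto u).comp h1
      exact ge_of_tendsto' htend hbnd
    have hkey' : μ {ω | u ≤ C ω} ≤ μ {ω | u < C ω} := by
      rw [← ENNReal.ofReal_toReal (measure_ne_top μ {ω | u ≤ C ω}),
        ← ENNReal.ofReal_toReal (measure_ne_top μ {ω | u < C ω})]
      exact ENNReal.ofReal_le_ofReal (by rw [hG₀ u] at hkey; exact hkey)
    exact le_antisymm hkey' hle
  have hG₀' : ∀ u, (μ {ω | u ≤ C ω}).toReal = G₀ u := by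
    intro u; rw [hCIci, hG₀]
  -- S₀, G₀ equal 1 on negatives
  have hS₀neg : ∀ u : ℝ, u < 0 → S₀ u = 1 := by
    intro u hu
    have : {ω | u < T ω} = Set.univ := by
      ext ω; simp only [Set.mem_setOf_eq, Set.mem_univ, iff_true]
      exact lt_of_lt_of_le hu (hTnn ω)
    rw [hS₀, this, measure_univ, ENNReal.toReal_one]
  have hG₀neg : ∀ u : ℝ, u < 0 → G₀ u = 1 := by
    intro u hu
    have : {ω | u < C ω} = Set.univ := by
      ext ω; simp only [Set.mem_setOf_eq, Set.mem_univ, iff_true]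
      exact lt_of_lt_of_le hu (hCnn ω)
    rw [hG₀, this, measure_univ, ENNReal.toReal_one]
  -- product of survival functions
  have hprodsurv : ∀ u : ℝ, (μ {ω | u ≤ min (T ω) (C ω)}).toReal = S₀ u * G₀ u := by
    intro u
    have e : {ω | u ≤ min (T ω) (C ω)} = (T ⁻¹' Set.Ici u) ∩ (C ⁻¹' Set.Ici u) := by
      ext ω; simp [le_min_iff]
    rw [e, hind.measure_inter_preimage_eq_mul _ _ measurableSet_Ici measurableSet_Ici,
      ENNReal.toReal_mul]
    rw [show T ⁻¹' Set.Ici u = {ω | u ≤ T ω} from rfl,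
      show C ⁻¹' Set.Ici u = {ω | u ≤ C ω} from rfl, hS₀', hG₀']
  -- define g and its bound on [0,t]
  set g : ℝ → ℝ := fun u => lam₀ u / (S₀ u * G₀ u) with hgdef
  have hlam_eq : lam₀ = fun u => f u / S₀ u := funext hlam₀
  have hgm : Measurable g := by
    rw [hgdef, hlam_eq]
    exact (hf_cont.measurable.div hS₀cont.measurable).div
      (hS₀cont.measurable.mul hG₀cont.measurable)
  have hsubIcc : Set.Icc (0:ℝ) t ⊆ Set.Icc 0 t₀ := fun x hx => ⟨hx.1, hx.2.trans htt₀⟩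
  have hgco : ContinuousOn g (Set.Icc 0 t) := by
    rw [hgdef, hlam_eq]
    refine ContinuousOn.div (ContinuousOn.div hf_cont.continuousOn hS₀cont.continuousOn
      fun x hx => (hS₀pos x (hsubIcc hx)).ne') (hS₀cont.continuousOn.mul hG₀cont.continuousOn)
      fun x hx => ?_
    exact (mul_pos (hS₀pos x (hsubIcc hx)) (hG₀pos x (hsubIcc hx))).ne'
  obtain ⟨Mg, hMg⟩ := isCompact_Icc.exists_bound_of_continuousOn hgco
  have hMg0 : (0:ℝ) ≤ Mg := le_trans (norm_nonneg (g 0)) (hMg 0 ⟨le_rfl, ht0⟩)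
  -- rewrite the LHS inner integrals
  have hL1 : ∀ ω, (∫ u in (0:ℝ)..(min t (min (T ω) (C ω))), lam₀ u / (S₀ u * G₀ u))
      = ∫ u in Set.Ioc 0 t, Set.indicator (Set.Iic (min (T ω) (C ω))) g u := by
    intro ω
    rw [intervalIntegral.integral_of_le (le_min ht0 (le_min (hTnn ω) (hCnn ω))),
      MeasureTheory.setIntegral_indicator measurableSet_Iic]
    have he : Set.Ioc (0:ℝ) (min t (min (T ω) (C ω)))
        = Set.Ioc 0 t ∩ Set.Iic (min (T ω) (C ω)) := by
      ext u
      simp only [Set.mem_Ioc, Set.mem_inter_iff, Set.mem_Iic, le_min_iff]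
      tauto
    rw [he]
  -- Fubini
  have hA : MeasurableSet {p : Ω × ℝ | p.2 ≤ min (T p.1) (C p.1)} :=
    measurableSet_le measurable_snd (hY.comp measurable_fst)
  have huncurry : (Function.uncurry fun ω u => Set.indicator (Set.Iic (min (T ω) (C ω))) g u)
      = Set.indicator {p : Ω × ℝ | p.2 ≤ min (T p.1) (C p.1)} (fun p => g p.2) := by
    funext p
    simp only [Function.uncurry, Set.indicator_apply, Set.mem_Iic, Set.mem_setOf_eq]
  have hmeas_unc : Measurable (Function.uncurry fun ω u =>
      Set.indicator (Set.Iic (min (T ω) (C ω))) g u) := by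
    rw [huncurry]
    exact (hgm.comp measurable_snd).indicator hA
  have hae2 : ∀ᵐ p : Ω × ℝ ∂(μ.prod (volume.restrict (Set.Ioc 0 t))), p.2 ∈ Set.Ioc 0 t := by
    rw [ae_iff]
    have he : {p : Ω × ℝ | ¬ p.2 ∈ Set.Ioc 0 t} = (Set.univ : Set Ω) ×ˢ (Set.Ioc (0:ℝ) t)ᶜ := by
      ext p; simp
    rw [he, Measure.prod_prod, Measure.restrict_apply measurableSet_Ioc.compl]
    simp
  have hint_unc : Integrable (Function.uncurry fun ω u =>
      Set.indicator (Set.Iic (min (T ω) (C ω))) g u)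
      (μ.prod (volume.restrict (Set.Ioc 0 t))) := by
    refine Integrable.mono' (integrable_const Mg) hmeas_unc.aestronglyMeasurable ?_
    filter_upwards [hae2] with p hp
    rw [huncurry]
    simp only [Set.indicator_apply, Set.mem_setOf_eq]
    split_ifs with hcond
    · exact hMg p.2 ⟨hp.1.le, hp.2⟩
    · simpa using hMg0
  have hswap := MeasureTheory.integral_integral_swap hint_unc
  have hL2 : ∀ u ∈ Set.Ioc (0:ℝ) t,
      (∫ ω, Set.indicator (Set.Iic (min (T ω) (C ω))) g u ∂μ) = f u / S₀ u := by
    intro u hu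
    have he : (fun ω => Set.indicator (Set.Iic (min (T ω) (C ω))) g u)
        = Set.indicator {ω | u ≤ min (T ω) (C ω)} (fun _ => g u) := by
      funext ω
      simp only [Set.indicator_apply, Set.mem_Iic, Set.mem_setOf_eq]
    have hsetm : MeasurableSet {ω | u ≤ min (T ω) (C ω)} :=
      measurableSet_le measurable_const hY
    rw [he, MeasureTheory.integral_indicator_const _ hsetm, measureReal_def, hprodsurv, smul_eq_mul]
    have hS := (hS₀pos u ⟨hu.1.le, hu.2.trans htt₀⟩).ne'
    have hG := (hG₀pos u ⟨hu.1.le, hu.2.trans htt₀⟩).ne'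
    simp only [hgdef, hlam₀]
    field_simp
  have hLHS : (∫ ω, (∫ u in (0:ℝ)..(min t (min (T ω) (C ω))), lam₀ u / (S₀ u * G₀ u)) ∂μ)
      = ∫ u in Set.Ioc 0 t, f u / S₀ u := by
    calc ∫ ω, (∫ u in (0:ℝ)..(min t (min (T ω) (C ω))), lam₀ u / (S₀ u * G₀ u)) ∂μ
        = ∫ ω, (∫ u in Set.Ioc 0 t, Set.indicator (Set.Iic (min (T ω) (C ω))) g u) ∂μ :=
          integral_congr_ae (Filter.Eventually.of_forall hL1)
      _ = ∫ u in Set.Ioc 0 t, ∫ ω, Set.indicator (Set.Iic (min (T ω) (C ω))) g u ∂μ := hswap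
      _ = ∫ u in Set.Ioc 0 t, f u / S₀ u :=
          setIntegral_congr_fun measurableSet_Ioc fun u hu => hL2 u hu
  -- RHS
  set h : ℝ → ℝ := fun s => 1 / (S₀ s * G₀ s) with hhdef
  have hhm : Measurable h := measurable_const.div (hS₀cont.measurable.mul hG₀cont.measurable)
  have hhco : ContinuousOn h (Set.Icc 0 t) := by
    rw [hhdef]
    exact ContinuousOn.div continuousOn_const
      (hS₀cont.continuousOn.mul hG₀cont.continuousOn)
      fun x hx => (mul_pos (hS₀pos x (hsubIcc hx)) (hG₀pos x (hsubIcc hx))).ne'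
  obtain ⟨M₀, hM₀⟩ := isCompact_Icc.exists_bound_of_continuousOn hhco
  set M : ℝ := max M₀ 1 with hMdef
  have hM0 : (0:ℝ) ≤ M := le_trans zero_le_one (le_max_right _ _)
  have hMbound : ∀ s : ℝ, s ≤ t → ‖h s‖ ≤ M := by
    intro s hs
    rcases lt_or_ge s 0 with h' | h'
    · have he1 : h s = 1 := by
        simp only [hhdef]
        rw [hS₀neg s h', hG₀neg s h']
        norm_num
      rw [he1, hMdef, show ‖(1:ℝ)‖ = 1 from norm_one]
      exact le_max_right _ _
    · exact le_trans (hM₀ s ⟨h', hs⟩) (le_max_left _ _)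
  set φ : ℝ × ℝ → ℝ := fun p => if p.1 ≤ t ∧ p.1 ≤ p.2 then h p.1 else 0 with hφdef
  have hφm : Measurable φ := by
    rw [hφdef]
    refine Measurable.ite ?_ (hhm.comp measurable_fst) measurable_const
    exact (measurableSet_le measurable_fst measurable_const).inter
      (measurableSet_le measurable_fst measurable_snd)
  have hR0 : ∀ ω, (if min (T ω) (C ω) ≤ t ∧ T ω ≤ C ω then
      1 / (S₀ (min (T ω) (C ω)) * G₀ (min (T ω) (C ω))) else 0) = φ (T ω, C ω) := by
    intro ω
    simp only [hφdef, hhdef]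
    by_cases hTC : T ω ≤ C ω
    · rw [min_eq_left hTC]
    · simp [hTC]
  haveI hPT : IsProbabilityMeasure (μ.map T) := Measure.isProbabilityMeasure_map hT.aemeasurable
  haveI hPC : IsProbabilityMeasure (μ.map C) := Measure.isProbabilityMeasure_map hC.aemeasurable
  have hφint : Integrable φ ((μ.map T).prod (μ.map C)) := by
    refine Integrable.mono' (integrable_const M) hφm.aestronglyMeasurable ?_
    refine Filter.Eventually.of_forall fun p => ?_
    simp only [hφdef]
    split_ifs with hc
    · exact hMbound p.1 hc.1
    · simpa using hM0
  have hprodlaw : μ.map (fun ω => (T ω, C ω)) = (μ.map T).prod (μ.map C) :=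
    (indepFun_iff_map_prod_eq_prod_map_map hT.aemeasurable hC.aemeasurable).mp hind
  have hinner : ∀ s : ℝ, (∫ c, φ (s, c) ∂(μ.map C))
      = if s ≤ t then h s * G₀ s else 0 := by
    intro s
    by_cases hst : s ≤ t
    · have he : (fun c => φ (s, c)) = Set.indicator (Set.Ici s) (fun _ => h s) := by
        funext c
        simp only [hφdef, hst, true_and, Set.indicator_apply, Set.mem_Ici]
      rw [he, MeasureTheory.integral_indicator_const _ measurableSet_Ici,
        measureReal_def, Measure.map_apply hC measurableSet_Ici, if_pos hst]
      rw [show C ⁻¹' Set.Ici s = {ω | s ≤ C ω} from rfl, hCIci s, ← hG₀, smul_eq_mul, mul_comm]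
    · simp [hφdef, hst]
  set ψ : ℝ → ℝ := fun s => if s ≤ t then h s * G₀ s else 0 with hψdef
  have hψm : Measurable ψ := by
    rw [hψdef]
    exact Measurable.ite (measurableSet_le measurable_id measurable_const)
      (hhm.mul hG₀cont.measurable) measurable_const
  have hG01 : ∀ s, G₀ s ≤ 1 := by
    intro s
    rw [hG₀]
    exact le_trans (ENNReal.toReal_mono ENNReal.one_ne_top prob_le_one)
      (le_of_eq ENNReal.toReal_one)
  have hG00 : ∀ s, 0 ≤ G₀ s := fun s => by rw [hG₀]; exact ENNReal.toReal_nonneg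
  have hψbound : ∀ s, |ψ s| ≤ M := by
    intro s
    simp only [hψdef]
    split_ifs with hc
    · rw [abs_mul]
      calc |h s| * |G₀ s| ≤ M * 1 := by
            refine mul_le_mul (hMbound s hc) ?_ (abs_nonneg _) hM0
            rw [abs_of_nonneg (hG00 s)]
            exact hG01 s
        _ = M := mul_one M
    · simpa using hM0
  have h6 : ∫ s, ψ s ∂(μ.map T) = ∫ s, f s * ψ s := by
    rw [hmapT]
    have heq : (fun u => ENNReal.ofReal (f u))
        = fun u => ((Real.toNNReal (f u) : ENNReal)) := rfl
    rw [heq, integral_withDensity_eq_integral_smul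
      (show Measurable fun u => Real.toNNReal (f u) from
        measurable_real_toNNReal.comp hf_cont.measurable) ψ]
    refine integral_congr_ae (Filter.Eventually.of_forall fun u => ?_)
    show Real.toNNReal (f u) • ψ u = f u * ψ u
    rw [NNReal.smul_def, smul_eq_mul, Real.coe_toNNReal _ (hf_nn u)]
  have hfψint : Integrable (fun u => f u * ψ u) := by
    have hΦ : Integrable (Set.indicator (Set.Iic t) fun u => M * f u) := by
      refine MeasureTheory.IntegrableOn.integrable_indicator ?_ measurableSet_Iic
      exact (hfint t).const_mul M
    refine Integrable.mono' hΦ ((hf_cont.measurable.mul hψm).aestronglyMeasurable) ?_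
    refine Filter.Eventually.of_forall fun u => ?_
    by_cases hut : u ≤ t
    · rw [Set.indicator_of_mem (Set.mem_Iic.mpr hut)]
      rw [Real.norm_eq_abs, abs_mul, abs_of_nonneg (hf_nn u)]
      calc f u * |ψ u| ≤ f u * M := mul_le_mul_of_nonneg_left (hψbound u) (hf_nn u)
        _ = M * f u := mul_comm _ _
    · have : ψ u = 0 := by simp [hψdef, hut]
      rw [this, Set.indicator_of_notMem (by simpa using hut)]
      simp
  have hT0 : μ {ω | T ω ≤ (0:ℝ)} = 0 := by
    have h1 : {ω | (0:ℝ) ≤ T ω} = Set.univ := Set.eq_univ_of_forall fun ω => hTnn ω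
    have h2 : μ {ω | (0:ℝ) < T ω} = 1 := by rw [← hTIci 0, h1, measure_univ]
    have h3 : {ω | T ω ≤ (0:ℝ)} = {ω | (0:ℝ) < T ω}ᶜ := by ext ω; simp [not_lt]
    rw [h3, measure_compl (show MeasurableSet {ω | (0:ℝ) < T ω} from hT measurableSet_Ioi)
      (measure_ne_top μ _), measure_univ, h2, tsub_self]
  have hfae : f =ᵐ[volume.restrict (Set.Iic (0:ℝ))] 0 := by
    have hz : ∫ u in Set.Iic (0:ℝ), f u = 0 := by rw [← hdens 0, hT0]; simp
    exact (MeasureTheory.setIntegral_eq_zero_iff_of_nonneg_ae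
      (Filter.Eventually.of_forall fun u => hf_nn u) (hfint 0)).mp hz
  have hIic0 : ∫ u in Set.Iic (0:ℝ), f u * ψ u = 0 := by
    have hz : (fun u => f u * ψ u) =ᵐ[volume.restrict (Set.Iic (0:ℝ))] 0 := by
      filter_upwards [hfae] with u hu
      simp [hu]
    rw [integral_congr_ae hz]
    simp
  have hIoi0 : ∫ u in (Set.Iic (0:ℝ))ᶜ, f u * ψ u = ∫ u in Set.Ioc 0 t, f u / S₀ u := by
    rw [Set.compl_Iic]
    have hcong : Set.EqOn (fun u => f u * ψ u)
        (Set.indicator (Set.Ioc 0 t) fun u => f u / S₀ u) (Set.Ioi 0) := by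
      intro x hx
      by_cases hxt : x ≤ t
      · have hx' : x ∈ Set.Ioc (0:ℝ) t := ⟨hx, hxt⟩
        have hS := (hS₀pos x ⟨le_of_lt hx, hxt.trans htt₀⟩).ne'
        have hG := (hG₀pos x ⟨le_of_lt hx, hxt.trans htt₀⟩).ne'
        simp only [hψdef, hhdef, if_pos hxt, Set.indicator_of_mem hx']
        field_simp
      · have hnm : x ∉ Set.Ioc (0:ℝ) t := fun hmem => hxt hmem.2
        simp [hψdef, hxt, Set.indicator_of_notMem hnm]
    rw [MeasureTheory.setIntegral_congr_fun measurableSet_Ioi hcong,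
      MeasureTheory.setIntegral_indicator measurableSet_Ioc,
      Set.inter_eq_right.mpr Set.Ioc_subset_Ioi_self]
  have h7 : ∫ u, f u * ψ u = ∫ u in Set.Ioc 0 t, f u / S₀ u := by
    rw [← MeasureTheory.integral_add_compl measurableSet_Iic hfψint, hIic0, hIoi0, zero_add]
  have hRHS : (∫ ω, (if min (T ω) (C ω) ≤ t ∧ T ω ≤ C ω then
      1 / (S₀ (min (T ω) (C ω)) * G₀ (min (T ω) (C ω))) else 0) ∂μ)
      = ∫ u in Set.Ioc 0 t, f u / S₀ u := by
    calc (∫ ω, (if min (T ω) (C ω) ≤ t ∧ T ω ≤ C ω then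
        1 / (S₀ (min (T ω) (C ω)) * G₀ (min (T ω) (C ω))) else 0) ∂μ)
        = ∫ ω, φ (T ω, C ω) ∂μ := integral_congr_ae (Filter.Eventually.of_forall hR0)
      _ = ∫ p, φ p ∂(μ.map fun ω => (T ω, C ω)) :=
          (integral_map (hT.aemeasurable.prodMk hC.aemeasurable)
            hφm.aestronglyMeasurable).symm
      _ = ∫ p, φ p ∂((μ.map T).prod (μ.map C)) := by rw [hprodlaw]
      _ = ∫ s, (∫ c, φ (s, c) ∂(μ.map C)) ∂(μ.map T) := MeasureTheory.integral_prod φ hφint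
      _ = ∫ s, ψ s ∂(μ.map T) := integral_congr_ae (Filter.Eventually.of_forall hinner)
      _ = ∫ s, f s * ψ s := h6
      _ = ∫ u in Set.Ioc 0 t, f u / S₀ u := h7
  rw [hLHS, hRHS]
end
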